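/- arXiv:2503.21490 — 6 statements merged into one kernel-verified Lean document; each statement's English description precedes it below -/
import Mathlib

section
/- For every sufficiently large real number x, there exist positive integers n₁, n₂ with n₁·n₂ ∈ [x, x + C·x^(1/4)] for some absolute constant C, and with n₁, n₂ both in the interval [c·√(n₁n₂), C'·√(n₁n₂)] for some fixed constants 0 < c < 1 < C'. (Existence of an almost square in the interval [x, x + O(x^(1/4))].) -/
open Real

private lemma as_le_of_sq_le_sq {u v : ℝ} (hu : 0 ≤ u) (hv : 0 ≤ v) (h : u^2 ≤ v^2) :
    u ≤ v := by nlinarith [sq_nonneg (u - v), sq_nonneg (u + v)]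

private lemma as_bound1 {b s : ℝ} (hbnn : 0 ≤ b) (hbs : b^2 ≤ 2*s+1) (hbls : b ≤ s)
    (hs10 : 10 ≤ s) : 2*b+1 ≤ 4 * Real.sqrt s := by
  have h2 : (2*b+1)^2 ≤ 16 * s := by nlinarith
  have h4 : (4 * Real.sqrt s)^2 = 16 * s := by
    rw [mul_pow, Real.sq_sqrt (by linarith : (0:ℝ) ≤ s)]; ring
  exact as_le_of_sq_le_sq (by linarith) (by positivity) (by linarith)

private lemma as_ratio {u v r : ℝ} (hu : 0 < u) (huv : u ≤ v) (hv3 : v ≤ 3*u)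
    (hr0 : 0 ≤ r) (hr2 : r^2 = u*v) :
    u ≤ r ∧ r ≤ v ∧ r ≤ 3*u ∧ v ≤ 2*r := by
  refine ⟨?_, ?_, ?_, ?_⟩
  · exact as_le_of_sq_le_sq hu.le hr0 (by nlinarith)
  · exact as_le_of_sq_le_sq hr0 (by linarith) (by nlinarith)
  · exact as_le_of_sq_le_sq hr0 (by linarith) (by nlinarith)
  · exact as_le_of_sq_le_sq (by linarith) (by linarith) (by nlinarith)

/-- For every sufficiently large real `x`, the interval `[x, x + C·x^(1/4)]` contains
an almost square `n₁·n₂` with `c·√(n₁n₂) ≤ n₁, n₂ ≤ C'·√(n₁n₂)`. -/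
theorem almost_square_in_short_interval :
    ∃ (c C C' : ℝ), 0 < c ∧ c < 1 ∧ 1 < C' ∧ 0 < C ∧
      ∃ x₀ : ℝ, ∀ x : ℝ, x₀ ≤ x →
        ∃ n₁ n₂ : ℕ, 0 < n₁ ∧ 0 < n₂ ∧
          x ≤ (n₁ * n₂ : ℕ) ∧ ((n₁ * n₂ : ℕ) : ℝ) ≤ x + C * x ^ ((1:ℝ)/4) ∧
          c * Real.sqrt ((n₁ * n₂ : ℕ) : ℝ) ≤ n₁ ∧ (n₁ : ℝ) ≤ C' * Real.sqrt ((n₁ * n₂ : ℕ) : ℝ) ∧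
          c * Real.sqrt ((n₁ * n₂ : ℕ) : ℝ) ≤ n₂ ∧ (n₂ : ℝ) ≤ C' * Real.sqrt ((n₁ * n₂ : ℕ) : ℝ) := by
  refine ⟨1/3, 4, 2, by norm_num, by norm_num, by norm_num, by norm_num, 100, ?_⟩
  intro x hx
  have hx0 : (0:ℝ) < x := by linarith
  set s := Real.sqrt x with hs
  have hs0 : (0:ℝ) ≤ s := Real.sqrt_nonneg x
  have hsx : s^2 = x := Real.sq_sqrt hx0.le
  have hs10 : (10:ℝ) ≤ s := by
    have h : Real.sqrt 100 ≤ s := Real.sqrt_le_sqrt hx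
    have : Real.sqrt 100 = 10 := by
      rw [show (100:ℝ) = 10^2 by norm_num, Real.sqrt_sq (by norm_num)]
    linarith
  set a := ⌈s⌉₊ with ha
  have has : s ≤ (a:ℝ) := Nat.le_ceil s
  have halt : (a:ℝ) < s + 1 := Nat.ceil_lt_add_one hs0
  have hxa : x ≤ (a:ℝ)^2 := by nlinarith
  have hy0 : (0:ℝ) ≤ (a:ℝ)^2 - x := by linarith
  have hyb : (a:ℝ)^2 - x ≤ 2*s + 1 := by nlinarith
  set b := ⌊Real.sqrt ((a:ℝ)^2 - x)⌋₊ with hb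
  have hb1 : (b:ℝ) ≤ Real.sqrt ((a:ℝ)^2 - x) := Nat.floor_le (Real.sqrt_nonneg _)
  have hbnn : (0:ℝ) ≤ (b:ℝ) := Nat.cast_nonneg b
  have hb2 : (b:ℝ)^2 ≤ (a:ℝ)^2 - x := by
    nlinarith [Real.sq_sqrt hy0, Real.sqrt_nonneg ((a:ℝ)^2 - x)]
  have hb3 : Real.sqrt ((a:ℝ)^2 - x) < (b:ℝ) + 1 := Nat.lt_floor_add_one _
  have hb4 : (a:ℝ)^2 - x < ((b:ℝ)+1)^2 := by
    nlinarith [Real.sq_sqrt hy0, Real.sqrt_nonneg ((a:ℝ)^2 - x)]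
  have hbs : (b:ℝ)^2 ≤ 2*s+1 := le_trans hb2 hyb
  have hbls : (b:ℝ) ≤ s := by nlinarith
  have h2b : 2*(b:ℝ) ≤ (a:ℝ) := by nlinarith
  have hba : b < a := by
    have : (b:ℝ) < (a:ℝ) := by nlinarith
    exact_mod_cast this
  clear_value a b s
  clear hb ha
  have hcast : (((a - b) * (a + b) : ℕ) : ℝ) = (a:ℝ)^2 - (b:ℝ)^2 := by
    push_cast [Nat.cast_sub hba.le]
    ring
  set N : ℝ := (((a - b) * (a + b) : ℕ) : ℝ) with hN
  have hNab : N = (a:ℝ)^2 - (b:ℝ)^2 := hcast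
  have hxN : x ≤ N := by rw [hNab]; linarith
  have hN0 : (0:ℝ) ≤ N := le_trans hx0.le hxN
  set r := Real.sqrt N with hr
  have hr0 : (0:ℝ) ≤ r := Real.sqrt_nonneg N
  have hr2 : r^2 = N := Real.sq_sqrt hN0
  have hn1 : ((a - b : ℕ) : ℝ) = (a:ℝ) - (b:ℝ) := by
    push_cast [Nat.cast_sub hba.le]; ring
  have hn2 : ((a + b : ℕ) : ℝ) = (a:ℝ) + (b:ℝ) := by push_cast; ring
  clear_value N r
  -- x^(1/4) = sqrt s
  have hx14 : x ^ ((1:ℝ)/4) = Real.sqrt s := by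
    rw [show ((1:ℝ)/4) = (1/2) * (1/2) by norm_num, Real.rpow_mul hx0.le,
      hs, Real.sqrt_eq_rpow, Real.sqrt_eq_rpow]
  -- the interval upper bound
  have hexp : ((b:ℝ)+1)^2 = (b:ℝ)^2 + 2*(b:ℝ) + 1 := by ring
  have h1 : N < x + 2*(b:ℝ) + 1 := by rw [hNab]; linarith
  have h3 : 2*(b:ℝ)+1 ≤ 4 * Real.sqrt s := as_bound1 hbnn hbs hbls hs10
  have hupper : N ≤ x + 4 * x ^ ((1:ℝ)/4) := by rw [hx14]; linarith
  -- ratio facts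
  have hpos1 : (0:ℝ) < (a:ℝ) - b := by
    have : (b:ℝ) < (a:ℝ) := by exact_mod_cast hba
    linarith
  have hab1 : (a:ℝ) - b ≤ (a:ℝ) + b := by linarith
  have hab2 : (a:ℝ) + b ≤ 3 * ((a:ℝ) - b) := by linarith
  have hrr : r^2 = ((a:ℝ) - b) * ((a:ℝ) + b) := by rw [hr2, hNab]; ring
  obtain ⟨hq1, hq2, hq3, hq4⟩ := as_ratio hpos1 hab1 hab2 hr0 hrr
  refine ⟨a - b, a + b, by omega, by omega, ?_, ?_, ?_, ?_, ?_, ?_⟩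
  · rw [← hN]; exact hxN
  · rw [← hN]; exact hupper
  · rw [← hN, ← hr, hn1]; linarith
  · rw [← hN, ← hr, hn1]; linarith
  · rw [← hN, ← hr, hn2]; linarith
  · rw [← hN, ← hr, hn2]; linarith
end

section
/- For every real x > 1, with a = ⌈√x⌉ and b = ⌊√(a² − x)⌋, one has 0 ≤ (a−b)(a+b) − x ≤ C·x^(1/4) for some absolute constant C. -/
open Real

/-- For `x > 1`, with `a = ⌈√x⌉` and `b = ⌊√(a² − x)⌋`, one has
`0 ≤ (a−b)(a+b) − x ≤ C·x^(1/4)` for an absolute constant `C`. -/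
theorem almost_square_construction :
    ∃ C : ℝ, 0 < C ∧ ∀ x : ℝ, 1 < x →
      ∀ a b : ℤ, a = ⌈Real.sqrt x⌉ → b = ⌊Real.sqrt ((a : ℝ)^2 - x)⌋ →
        0 ≤ ((a - b) * (a + b) : ℤ) - x ∧ ((a - b) * (a + b) : ℤ) - x ≤ C * x ^ ((1:ℝ)/4) := by
  refine ⟨4, by norm_num, ?_⟩
  intro x hx a b ha hb
  have hx0 : (0:ℝ) < x := by linarith
  have hs1 : (1:ℝ) ≤ Real.sqrt x := by
    rw [show (1:ℝ) = Real.sqrt 1 by simp]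
    exact Real.sqrt_le_sqrt hx.le
  have hax : Real.sqrt x ≤ (a:ℝ) := ha ▸ Int.le_ceil _
  have hax' : (a:ℝ) < Real.sqrt x + 1 := ha ▸ Int.ceil_lt_add_one _
  have hsx : Real.sqrt x ^ 2 = x := Real.sq_sqrt hx0.le
  have hA : 0 ≤ (a:ℝ)^2 - x := by nlinarith
  set t := Real.sqrt ((a:ℝ)^2 - x) with ht
  have ht0 : 0 ≤ t := Real.sqrt_nonneg _
  have ht2 : t ^ 2 = (a:ℝ)^2 - x := Real.sq_sqrt hA
  have hbt : (b:ℝ) ≤ t := hb ▸ Int.floor_le _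
  have hbt' : t < (b:ℝ) + 1 := hb ▸ Int.lt_floor_add_one _
  have hb0 : (0:ℝ) ≤ (b:ℝ) := by
    have : (0:ℤ) ≤ b := hb ▸ Int.floor_nonneg.mpr ht0
    exact_mod_cast this
  have hkey : (((a - b) * (a + b) : ℤ) : ℝ) = (a:ℝ)^2 - (b:ℝ)^2 := by
    push_cast; ring
  constructor
  · rw [hkey]
    nlinarith [sq_nonneg ((b:ℝ) - t)]
  · rw [hkey]
    -- a² - b² - x = t² - b² ≤ 2t, and t² ≤ 2√x + 1 ≤ 3√x
    have hq : (x ^ ((1:ℝ)/4)) ^ 2 = Real.sqrt x := by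
      rw [Real.sqrt_eq_rpow, ← Real.rpow_natCast (x ^ ((1:ℝ)/4)) 2,
        ← Real.rpow_mul hx0.le]
      norm_num
    have hq0 : 0 ≤ x ^ ((1:ℝ)/4) := Real.rpow_nonneg hx0.le _
    have ht3 : t ^ 2 ≤ 3 * Real.sqrt x := by nlinarith
    have h2t : 2 * t ≤ 4 * x ^ ((1:ℝ)/4) := by nlinarith
    nlinarith
end

section
/- Let σ > 1 and δ > 0. For real ξ with e^(−2δ) ≤ ξ ≤ 1, the contour integral (1/(2πi)) ∫_{σ−i∞}^{σ+i∞} ξ^s (e^{δs} − 1)²/s² ds equals min(log(e^{2δ}ξ), log(1/ξ)); and for ξ > 1 or 0 < ξ < e^(−2δ) the integral is 0. -/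
open Real Complex MeasureTheory FourierTransform

/-- The triangle function of half-width `δ`. -/
noncomputable def Tri (δ u : ℝ) : ℝ := max 0 (min u (2*δ - u))

lemma tri_continuous (δ : ℝ) : Continuous (Tri δ) := by
  unfold Tri; fun_prop

lemma tri_eq_zero (δ : ℝ) {u : ℝ} (h : u ≤ 0 ∨ 2*δ ≤ u) : Tri δ u = 0 := by
  rcases h with h | h
  · exact max_eq_left (le_trans (min_le_left _ _) h)
  · exact max_eq_left (le_trans (min_le_right _ _) (by linarith))

lemma cexp_hasDerivAt (s : ℂ) (u : ℝ) :
    HasDerivAt (fun v : ℝ => Complex.exp (s*v)) (Complex.exp (s*u) * s) u := by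
  have h0 : HasDerivAt (fun v : ℝ => (v:ℂ)) 1 u := (hasDerivAt_id u).ofReal_comp
  simpa using (h0.const_mul s).cexp

/-- The Laplace transform of the triangle function. -/
lemma triangle_integral (δ : ℝ) (hδ : 0 < δ) (s : ℂ) (hs : s ≠ 0) :
    ∫ u in (0:ℝ)..(2*δ), (Tri δ u : ℂ) * Complex.exp (s*u)
      = (Complex.exp (δ*s) - 1)^2 / s^2 := by
  have hint : ∀ a b : ℝ, IntervalIntegrable (fun u : ℝ => (Tri δ u : ℂ) * Complex.exp (s*u))
      volume a b := by
    intro a b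
    apply Continuous.intervalIntegrable
    exact (Complex.continuous_ofReal.comp (tri_continuous δ)).mul (by fun_prop)
  rw [← intervalIntegral.integral_add_adjacent_intervals (b := δ) (hint 0 δ) (hint δ (2*δ))]
  have h1 : ∫ u in (0:ℝ)..δ, (Tri δ u : ℂ) * Complex.exp (s*u)
      = ∫ u in (0:ℝ)..δ, (u:ℂ) * Complex.exp (s*u) := by
    apply intervalIntegral.integral_congr
    intro u hu
    rw [Set.uIcc_of_le hδ.le] at hu
    have h1 : (0:ℝ) ≤ u := hu.1
    have h2 : u ≤ δ := hu.2
    have : Tri δ u = u := by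
      unfold Tri
      rw [min_eq_left (by linarith), max_eq_right h1]
    simp [this]
  have h2 : ∫ u in δ..(2*δ), (Tri δ u : ℂ) * Complex.exp (s*u)
      = ∫ u in δ..(2*δ), ((2*δ - u : ℝ):ℂ) * Complex.exp (s*u) := by
    apply intervalIntegral.integral_congr
    intro u hu
    rw [Set.uIcc_of_le (by linarith)] at hu
    have h1 : δ ≤ u := hu.1
    have h2 : u ≤ 2*δ := hu.2
    have : Tri δ u = 2*δ - u := by
      unfold Tri
      rw [min_eq_right (by linarith), max_eq_right (by linarith)]
    simp [this]
  have e1 := intervalIntegral.integral_eq_sub_of_hasDerivAt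
      (a := (0:ℝ)) (b := δ)
      (f := fun u : ℝ => ((s*u - 1) * Complex.exp (s*u))/s^2)
      (f' := fun u : ℝ => (u:ℂ) * Complex.exp (s*u))
      (fun u _ => by
        have h0 : HasDerivAt (fun v : ℝ => (v:ℂ)) 1 u := (hasDerivAt_id u).ofReal_comp
        have := (((h0.const_mul s).sub_const 1).mul (cexp_hasDerivAt s u)).div_const (s^2)
        convert this using 1
        · rfl
        · rfl
        field_simp
        ring)
      (by apply Continuous.intervalIntegrable; fun_prop)
  have e2 := intervalIntegral.integral_eq_sub_of_hasDerivAt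
      (a := δ) (b := 2*δ)
      (f := fun u : ℝ => ((s*(2*(δ:ℂ) - u) + 1) * Complex.exp (s*u))/s^2)
      (f' := fun u : ℝ => ((2*δ - u : ℝ):ℂ) * Complex.exp (s*u))
      (fun u _ => by
        have h0 : HasDerivAt (fun v : ℝ => 2*(δ:ℂ) - v) (-1) u := by
          have h1 : HasDerivAt (fun v : ℝ => (v:ℂ)) 1 u := (hasDerivAt_id u).ofReal_comp
          simpa using h1.const_sub (2*(δ:ℂ))
        have := (((h0.const_mul s).add_const 1).mul (cexp_hasDerivAt s u)).div_const (s^2)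
        convert this using 1
        · rfl
        · rfl
        push_cast
        field_simp
        ring)
      (by apply Continuous.intervalIntegrable; fun_prop)
  rw [h1, h2, e1, e2]
  beta_reduce
  push_cast
  simp only [mul_zero, Complex.exp_zero]
  rw [show s * (2*(δ:ℂ)) = s*δ + s*δ by ring, Complex.exp_add,
    show (δ:ℂ) * s = s * δ by ring]
  field_simp
  ring

/-- The whole-line version. -/
lemma line_integral (δ a : ℝ) (hδ : 0 < δ) (s : ℂ) (hs : s ≠ 0) :
    ∫ v : ℝ, (Tri δ (v - a) : ℂ) * Complex.exp (s * v)
      = Complex.exp (s*a) * (Complex.exp (δ*s) - 1)^2 / s^2 := by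
  have step1 : ∫ v : ℝ, (Tri δ (v - a) : ℂ) * Complex.exp (s * v)
      = ∫ u : ℝ, (Tri δ u : ℂ) * Complex.exp (s * (u + a)) := by
    rw [← integral_add_right_eq_self (fun v : ℝ => (Tri δ (v - a) : ℂ) * Complex.exp (s * v)) a]
    simp
  rw [step1]
  have step2 : ∀ u : ℝ, (Tri δ u : ℂ) * Complex.exp (s * (u + a))
      = Complex.exp (s*a) * ((Tri δ u : ℂ) * Complex.exp (s * u)) := by
    intro u
    rw [mul_add, Complex.exp_add]
    ring
  simp_rw [step2]
  rw [integral_const_mul]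
  have step3 : ∫ u : ℝ, (Tri δ u : ℂ) * Complex.exp (s * u)
      = ∫ u in Set.Ioc (0:ℝ) (2*δ), (Tri δ u : ℂ) * Complex.exp (s * u) := by
    rw [setIntegral_eq_integral_of_forall_compl_eq_zero]
    intro u hu
    simp only [Set.mem_Ioc, not_and_or, not_lt, not_le] at hu
    have : Tri δ u = 0 := by
      apply tri_eq_zero
      rcases hu with h | h
      · exact Or.inl h
      · exact Or.inr h.le
    rw [this]
    simp
  rw [step3, ← intervalIntegral.integral_of_le (by linarith : (0:ℝ) ≤ 2*δ),
    triangle_integral δ hδ s hs, mul_div_assoc]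

/-- Evaluation of the kernel `(e^{δs}−1)²/s²` contour integral on the line `Re s = σ > 1`:
it equals `min(log(e^{2δ}ξ), log(1/ξ))` for `e^{−2δ} ≤ ξ ≤ 1` and vanishes for `ξ > 1`
or `0 < ξ < e^{−2δ}`. -/
theorem kernel_contour_integral (σ δ : ℝ) (hσ : 1 < σ) (hδ : 0 < δ) (ξ : ℝ) :
    (Real.exp (-2*δ) ≤ ξ ∧ ξ ≤ 1 →
      ((1 / (2 * Real.pi) : ℝ) : ℂ) * ∫ t : ℝ,
          (ξ : ℂ) ^ ((σ : ℂ) + t * Complex.I) *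
            (Complex.exp (δ * ((σ : ℂ) + t * Complex.I)) - 1)^2 / ((σ : ℂ) + t * Complex.I)^2
        = ((min (Real.log (Real.exp (2*δ) * ξ)) (Real.log (1/ξ)) : ℝ) : ℂ)) ∧
    ((1 < ξ ∨ (0 < ξ ∧ ξ < Real.exp (-2*δ))) →
      ((1 / (2 * Real.pi) : ℝ) : ℂ) * ∫ t : ℝ,
          (ξ : ℂ) ^ ((σ : ℂ) + t * Complex.I) *
            (Complex.exp (δ * ((σ : ℂ) + t * Complex.I)) - 1)^2 / ((σ : ℂ) + t * Complex.I)^2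
        = (0 : ℂ)) := by
  have hπ : (0:ℝ) < π := Real.pi_pos
  have main : ∀ x : ℝ, 0 < x →
      ((1 / (2 * Real.pi) : ℝ) : ℂ) * (∫ t : ℝ,
          (x : ℂ) ^ ((σ : ℂ) + t * Complex.I) *
            (Complex.exp (δ * ((σ : ℂ) + t * Complex.I)) - 1)^2 / ((σ : ℂ) + t * Complex.I)^2)
        = ((Tri δ (- Real.log x) : ℝ) : ℂ) := by
    intro x hx
    set a : ℝ := Real.log x with ha
    set f : ℝ → ℂ := fun v => (Tri δ (v - a) : ℂ) * Complex.exp (σ * v) with hf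
    have hs : ∀ c : ℝ, ((σ:ℂ) + c * Complex.I) ≠ 0 := by
      intro c h
      have := congrArg Complex.re h
      simp at this
      linarith
    set G : ℝ → ℂ := fun t => Complex.exp (((σ:ℂ) + t * Complex.I) * a) *
        (Complex.exp (δ * ((σ:ℂ) + t * Complex.I)) - 1)^2 / ((σ:ℂ) + t * Complex.I)^2 with hG
    -- continuity and integrability of f
    have hf_cont : Continuous f := by
      apply Continuous.mul
      · exact Complex.continuous_ofReal.comp ((tri_continuous δ).comp
          (continuous_id.sub continuous_const))
      · fun_prop
    have hf_supp : ∀ v : ℝ, v ∉ Set.Icc a (a + 2*δ) → f v = 0 := by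
      intro v hv
      simp only [Set.mem_Icc, not_and_or, not_le] at hv
      have : Tri δ (v - a) = 0 := by
        apply tri_eq_zero
        rcases hv with h | h
        · exact Or.inl (by linarith)
        · exact Or.inr (by linarith)
      simp [hf, this]
    have hf_cs : HasCompactSupport f := HasCompactSupport.intro isCompact_Icc hf_supp
    have hf_int : Integrable f := hf_cont.integrable_of_hasCompactSupport hf_cs
    -- the Fourier transform of f
    have hFf : ∀ w : ℝ, 𝓕 f w = G (-(2*π*w)) := by
      intro w
      rw [Real.fourier_real_eq_integral_exp_smul]
      have : ∀ v : ℝ, Complex.exp (↑(-2 * π * v * w) * Complex.I) • f v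
          = (Tri δ (v - a) : ℂ) * Complex.exp (((σ:ℂ) + ((-(2*π*w) : ℝ) : ℂ) * Complex.I) * v) := by
        intro v
        rw [smul_eq_mul, hf]
        rw [show (((σ:ℂ) + ((-(2*π*w) : ℝ) : ℂ) * Complex.I) * v)
            = (σ:ℂ) * v + ↑(-2 * π * v * w) * Complex.I by push_cast; ring,
          Complex.exp_add]
        ring
      simp_rw [this]
      rw [line_integral δ a hδ _ (hs (-(2*π*w))), hG]
    -- integrability of the Fourier transform
    have hF_cont : Continuous (𝓕 f) := by
      apply VectorFourier.fourierIntegral_continuous Real.continuous_fourierChar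
        (by exact continuous_inner) hf_int
    set C : ℝ := Real.exp (σ*a) * (Real.exp (δ*σ) + 1)^2 with hC
    have hbound : ∀ w : ℝ, ‖𝓕 f w‖ ≤ C * (1 + w^2)⁻¹ := by
      intro w
      rw [hFf w, hG]
      set c : ℝ := -(2*π*w) with hc
      have h1 : ‖Complex.exp (((σ:ℂ) + c * Complex.I) * a)‖ = Real.exp (σ*a) := by
        rw [show (((σ:ℂ) + c * Complex.I) * a) = ((σ*a : ℝ):ℂ) + ((c*a : ℝ):ℂ) * Complex.I by
          push_cast; ring, Complex.norm_exp]
        simp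
      have h2 : ‖Complex.exp (δ * ((σ:ℂ) + c * Complex.I)) - 1‖ ≤ Real.exp (δ*σ) + 1 := by
        refine le_trans (norm_sub_le _ _) ?_
        rw [norm_one]
        have : ‖Complex.exp (δ * ((σ:ℂ) + c * Complex.I))‖ = Real.exp (δ*σ) := by
          rw [show ((δ:ℂ) * ((σ:ℂ) + c * Complex.I)) = ((δ*σ : ℝ):ℂ) + ((δ*c : ℝ):ℂ) * Complex.I by
            push_cast; ring, Complex.norm_exp]
          simp
        rw [this]
      have h3 : ‖((σ:ℂ) + c * Complex.I)^2‖ = σ^2 + c^2 := by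
        rw [norm_pow, Complex.sq_norm, Complex.normSq_apply]
        simp
        ring
      have h4 : (1:ℝ) + w^2 ≤ σ^2 + c^2 := by
        have hπ3 : (3:ℝ) < π := Real.pi_gt_three
        have hc2 : c^2 = 4*π^2*w^2 := by rw [hc]; ring
        have hσ2 : (1:ℝ) ≤ σ^2 := by nlinarith
        have hp2 : (9:ℝ) ≤ π^2 := by nlinarith
        have hX : 9*w^2 ≤ π^2*w^2 := by
          nlinarith [mul_nonneg (by linarith : (0:ℝ) ≤ π^2 - 9) (sq_nonneg w)]
        have h9 : w^2 ≤ 4*π^2*w^2 := by nlinarith [sq_nonneg w]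
        rw [hc2]
        linarith
      have hden : (0:ℝ) < 1 + w^2 := by positivity
      calc ‖Complex.exp (((σ:ℂ) + c * Complex.I) * a) *
              (Complex.exp (δ * ((σ:ℂ) + c * Complex.I)) - 1)^2 / ((σ:ℂ) + c * Complex.I)^2‖
          = Real.exp (σ*a) * ‖Complex.exp (δ * ((σ:ℂ) + c * Complex.I)) - 1‖^2 / (σ^2 + c^2) := by
            rw [norm_div, norm_mul, norm_pow, h1, h3]
        _ ≤ Real.exp (σ*a) * (Real.exp (δ*σ) + 1)^2 / (1 + w^2) := by
            apply div_le_div₀ (by positivity) ?_ hden h4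
            have h2' : (0:ℝ) ≤ ‖Complex.exp (δ * ((σ:ℂ) + c * Complex.I)) - 1‖ := norm_nonneg _
            gcongr
        _ = C * (1 + w^2)⁻¹ := by rw [hC]; ring
    have hF_int : Integrable (𝓕 f) := by
      apply Integrable.mono' (integrable_inv_one_add_sq.const_mul C)
        hF_cont.aestronglyMeasurable
      exact ae_of_all _ hbound
    -- Fourier inversion
    have hinv : 𝓕⁻ (𝓕 f) 0 = f 0 := hf_int.fourierInv_fourier_eq hF_int hf_cont.continuousAt
    have hint0 : ∫ w : ℝ, 𝓕 f w = f 0 := by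
      rw [← hinv, Real.fourierInv_eq']
      simp
    -- change of variables
    have hGF : ∀ t : ℝ, G t = 𝓕 f ((-(1/(2*π))) * t) := by
      intro t
      rw [hFf]
      congr 1
      field_simp
    have hGint : ∫ t : ℝ, G t = (2*π) • ∫ w : ℝ, 𝓕 f w := by
      simp_rw [hGF]
      rw [MeasureTheory.Measure.integral_comp_mul_left (𝓕 f) (-(1/(2*π)))]
      congr 1
      rw [show (-(1/(2*π)))⁻¹ = -(2*π) by field_simp, abs_neg, abs_of_pos (by positivity)]
    -- rewrite the integrand
    have hxC : (x:ℂ) ≠ 0 := by exact_mod_cast hx.ne'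
    have hcpow : ∀ t : ℝ, (x:ℂ) ^ ((σ:ℂ) + t * Complex.I)
        = Complex.exp (((σ:ℂ) + t * Complex.I) * a) := by
      intro t
      rw [Complex.cpow_def_of_ne_zero hxC, ← Complex.ofReal_log hx.le, mul_comm]
    calc ((1 / (2 * Real.pi) : ℝ) : ℂ) * (∫ t : ℝ,
          (x : ℂ) ^ ((σ : ℂ) + t * Complex.I) *
            (Complex.exp (δ * ((σ : ℂ) + t * Complex.I)) - 1)^2 / ((σ : ℂ) + t * Complex.I)^2)
        = ((1 / (2 * Real.pi) : ℝ) : ℂ) * (∫ t : ℝ, G t) := by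
          congr 1
          apply integral_congr_ae
          filter_upwards with t
          rw [hcpow t, hG]
      _ = ((1 / (2 * Real.pi) : ℝ) : ℂ) * ((2*π) • (f 0)) := by rw [hGint, hint0]
      _ = ((Tri δ (- a) : ℝ) : ℂ) := by
          rw [real_smul, ← mul_assoc, ← Complex.ofReal_mul]
          have : (1 / (2 * Real.pi)) * (2*π) = 1 := by field_simp
          rw [this, Complex.ofReal_one, one_mul, hf]
          simp
  constructor
  · rintro ⟨h1, h2⟩
    have hx : 0 < ξ := lt_of_lt_of_le (Real.exp_pos _) h1
    have ha1 : -(2*δ) ≤ Real.log ξ := by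
      rw [Real.le_log_iff_exp_le hx]
      convert h1 using 2
      ring
    have ha2 : Real.log ξ ≤ 0 := Real.log_nonpos hx.le h2
    have hreal : Tri δ (- Real.log ξ) = min (Real.log (Real.exp (2*δ) * ξ)) (Real.log (1/ξ)) := by
      rw [Real.log_mul (Real.exp_ne_zero _) hx.ne', Real.log_exp, one_div, Real.log_inv]
      unfold Tri
      rw [show 2*δ - -Real.log ξ = 2*δ + Real.log ξ by ring,
        max_eq_right (le_min (by linarith) (by linarith)), min_comm]
    rw [main ξ hx, hreal]
  · rintro (h | ⟨h0, h⟩)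
    · have hx : 0 < ξ := lt_trans one_pos h
      have ha : 0 < Real.log ξ := Real.log_pos h
      rw [main ξ hx, tri_eq_zero δ (Or.inl (by linarith))]
      simp
    · have ha : Real.log ξ < -(2*δ) := by
        have := Real.log_lt_log h0 h
        rwa [Real.log_exp, show (-2*δ) = -(2*δ) by ring] at this
      rw [main ξ h0, tri_eq_zero δ (Or.inr (by linarith))]
      simp
end

section
/- Let σ > 1. For real ξ ≥ 1, (1/(2πi)) ∫_{σ−i∞}^{σ+i∞} ξ^s/s² ds = log ξ, and for 0 < ξ ≤ 1 the integral equals 0. -/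
open Real MeasureTheory Set Filter FourierTransform Topology

/-- FTC: `∫_0^∞ x e^{-bx} dx = 1/b²` for `Re b > 0`. -/
lemma integral_mul_exp_neg_complex {b : ℂ} (hb : 0 < b.re) :
    ∫ x in Ioi (0:ℝ), (x:ℂ) * Complex.exp (-(b * x)) = 1 / b ^ 2 := by
  have hb0 : b ≠ 0 := fun h => by simp [h] at hb
  set F : ℝ → ℂ := fun x => -((x:ℂ)/b + 1/b^2) * Complex.exp (-(b*x)) with hF
  have hderiv : ∀ x ∈ Ici (0:ℝ),
      HasDerivAt F ((fun x : ℝ => (x:ℂ) * Complex.exp (-(b*x))) x) x := by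
    intro x _
    have h1 : HasDerivAt (fun z : ℂ => -(z/b + 1/b^2)) (-(1/b)) (x:ℂ) :=
      (((hasDerivAt_id (x:ℂ)).div_const b).add_const (1/b^2)).neg
    have h2 : HasDerivAt (fun z : ℂ => Complex.exp (-(b*z)))
        (Complex.exp (-(b*(x:ℂ))) * -(b * 1)) (x:ℂ) :=
      (((hasDerivAt_id (x:ℂ)).const_mul b).neg).cexp
    have hG := h1.mul h2
    have hG' : HasDerivAt (fun z : ℂ => -(z/b + 1/b^2) * Complex.exp (-(b*z)))
        ((x:ℂ) * Complex.exp (-(b*(x:ℂ)))) (x:ℂ) := by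
      convert hG using 1
      · rfl
      · rfl
      · rfl
      field_simp
      ring
    simpa [F] using hG'.comp_ofReal
  have hr : IntegrableOn (fun x : ℝ => x * Real.exp (-(b.re) * x)) (Ioi 0) := by
    simpa [Real.rpow_one] using
      integrableOn_rpow_mul_exp_neg_mul_rpow (by norm_num : (-1:ℝ) < 1) one_pos hb
  have f'int : IntegrableOn (fun x : ℝ => (x:ℂ) * Complex.exp (-(b*x))) (Ioi 0) := by
    refine Integrable.mono' hr ?_ ?_
    · exact (Complex.continuous_ofReal.mul
        (Complex.continuous_exp.comp (by continuity))).aestronglyMeasurable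
    · filter_upwards [ae_restrict_mem measurableSet_Ioi] with x hx
      simp only [norm_mul, Complex.norm_real, Real.norm_eq_abs, Complex.norm_exp]
      have : (-(b * (x:ℂ))).re = -(b.re) * x := by simp
      rw [this, abs_of_pos hx]
  have hlim : Tendsto F atTop (𝓝 0) := by
    have hre : (0:ℝ) < b.re := hb
    have t2 : Tendsto (fun x : ℝ => Real.exp (-(b.re * x))) atTop (𝓝 0) :=
      Real.tendsto_exp_neg_atTop_nhds_zero.comp (tendsto_id.const_mul_atTop hre)
    have t1 : Tendsto (fun x : ℝ => x * Real.exp (-(b.re * x))) atTop (𝓝 0) := by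
      have := ((tendsto_pow_mul_exp_neg_atTop_nhds_zero 1).comp
        (tendsto_id.const_mul_atTop hre)).const_mul (1/b.re)
      simp only [mul_zero] at this
      refine this.congr fun x => ?_
      simp only [Function.comp_apply, pow_one, id_eq]
      field_simp
    have tg : Tendsto (fun x : ℝ => (x * ‖b‖⁻¹ + ‖(1/b^2 : ℂ)‖) * Real.exp (-(b.re * x)))
        atTop (𝓝 0) := by
      have := (t1.const_mul (‖b‖⁻¹)).add (t2.const_mul (‖(1/b^2 : ℂ)‖))
      simp only [mul_zero, add_zero] at this
      refine this.congr fun x => ?_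
      ring
    refine squeeze_zero_norm' ?_ tg
    filter_upwards [eventually_ge_atTop (0:ℝ)] with x hx
    have hexp : ‖Complex.exp (-(b * (x:ℂ)))‖ = Real.exp (-(b.re * x)) := by
      rw [Complex.norm_exp]
      congr 1
      simp
    calc ‖F x‖ = ‖(x:ℂ)/b + 1/b^2‖ * Real.exp (-(b.re * x)) := by
          rw [hF]; rw [show ‖(-(↑x / b + 1 / b ^ 2) * Complex.exp (-(b * ↑x)))‖
            = ‖-((x:ℂ)/b + 1/b^2)‖ * ‖Complex.exp (-(b * (x:ℂ)))‖ from norm_mul _ _,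
            norm_neg, hexp]
      _ ≤ (x * ‖b‖⁻¹ + ‖(1/b^2 : ℂ)‖) * Real.exp (-(b.re * x)) := by
          gcongr
          refine (norm_add_le _ _).trans ?_
          gcongr
          simp [abs_of_nonneg hx, div_eq_mul_inv]
  have := MeasureTheory.integral_Ioi_of_hasDerivAt_of_tendsto' hderiv f'int hlim
  rw [this, hF]
  simp

noncomputable def perronF (σ : ℝ) : ℝ → ℂ :=
  fun x => (max x 0 : ℝ) * Complex.exp (-((σ:ℂ) * x))

lemma perronF_fourier (σ : ℝ) (hσ : 0 < σ) (s : ℝ) :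
    𝓕 (perronF σ) s = 1 / ((σ:ℂ) + 2*π*s*Complex.I)^2 := by
  rw [Real.fourier_real_eq_integral_exp_smul]
  have hzero : ∀ x : ℝ, x ∉ Ioi (0:ℝ) →
      Complex.exp (↑(-2*π*x*s)*Complex.I) • perronF σ x = 0 := by
    intro x hx
    simp only [mem_Ioi, not_lt] at hx
    simp [perronF, max_eq_right hx]
  rw [← setIntegral_eq_integral_of_forall_compl_eq_zero hzero]
  rw [setIntegral_congr_fun measurableSet_Ioi
    (g := fun x : ℝ => (x:ℂ) * Complex.exp (-(((σ:ℂ) + 2*π*s*Complex.I) * x)))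
    (fun x hx => by
      rw [mem_Ioi] at hx
      simp only [perronF, smul_eq_mul, max_eq_left hx.le]
      rw [show Complex.exp (↑(-2*π*x*s)*Complex.I) * ((x:ℂ) * Complex.exp (-((σ:ℂ) * x)))
        = (x:ℂ) * (Complex.exp (↑(-2*π*x*s)*Complex.I) * Complex.exp (-((σ:ℂ) * x))) by ring,
        ← Complex.exp_add, show (↑(-2*π*x*s)*Complex.I + -((σ:ℂ) * x))
        = -(((σ:ℂ) + 2*π*s*Complex.I) * x) by push_cast; ring])]
  exact integral_mul_exp_neg_complex (by simpa using hσ)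

lemma perronF_continuous (σ : ℝ) : Continuous (perronF σ) := by
  unfold perronF
  exact (Complex.continuous_ofReal.comp (continuous_id.max continuous_const)).mul
    (Complex.continuous_exp.comp (by continuity))

lemma perronF_integrable (σ : ℝ) (hσ : 0 < σ) : Integrable (perronF σ) := by
  have hr : IntegrableOn (fun x : ℝ => x * Real.exp (-σ * x)) (Ioi 0) := by
    simpa [Real.rpow_one] using
      integrableOn_rpow_mul_exp_neg_mul_rpow (by norm_num : (-1:ℝ) < 1) one_pos hσ
  have heq : perronF σ = Set.indicator (Ioi (0:ℝ)) (perronF σ) := by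
    funext x
    by_cases hx : x ∈ Ioi (0:ℝ)
    · rw [Set.indicator_of_mem hx]
    · rw [Set.indicator_of_notMem hx]
      simp only [mem_Ioi, not_lt] at hx
      simp [perronF, max_eq_right hx]
  rw [heq]
  rw [integrable_indicator_iff measurableSet_Ioi]
  refine Integrable.mono' hr ((perronF_continuous σ).aestronglyMeasurable.restrict) ?_
  filter_upwards [ae_restrict_mem measurableSet_Ioi] with x hx
  rw [mem_Ioi] at hx
  simp only [perronF, norm_mul, Complex.norm_real, Real.norm_eq_abs, Complex.norm_exp]
  rw [max_eq_left hx.le, abs_of_pos hx]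
  have : (-((σ:ℂ) * (x:ℂ))).re = -σ * x := by simp
  rw [this]

lemma perronF_fourier_integrable (σ : ℝ) (hσ : 1 ≤ σ) : Integrable (𝓕 (perronF σ)) := by
  have hσ0 : 0 < σ := lt_of_lt_of_le one_pos hσ
  have hne : ∀ s : ℝ, ((σ:ℂ) + 2*π*s*Complex.I) ≠ 0 := by
    intro s h
    have := congrArg Complex.re h
    simp at this
    exact hσ0.ne' this
  have heq : 𝓕 (perronF σ) = fun s : ℝ => 1 / ((σ:ℂ) + 2*(π:ℂ)*(s:ℂ)*Complex.I)^2 := by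
    funext s; exact perronF_fourier σ hσ0 s
  rw [heq]
  refine Integrable.mono' integrable_inv_one_add_sq ?_ ?_
  · refine (Continuous.div continuous_const ?_ (fun s => pow_ne_zero 2 (hne s))).aestronglyMeasurable
    continuity
  · refine Filter.Eventually.of_forall fun s => ?_
    have habs : ‖((σ:ℂ) + 2*π*s*Complex.I)‖ ^ 2 = σ^2 + (2*π*s)^2 := by
      rw [Complex.sq_norm, Complex.normSq_apply]
      simp
      ring
    rw [norm_div, norm_one, norm_pow]
    rw [one_div, habs]
    rw [inv_le_inv₀ (by positivity) (by positivity)]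
    have h1 : (1:ℝ) ≤ σ^2 := by nlinarith
    have h2 : s^2 ≤ (2*π*s)^2 := by
      have : (1:ℝ) ≤ (2*π)^2 := by nlinarith [Real.pi_gt_three]
      calc s^2 = 1 * s^2 := by ring
        _ ≤ (2*π)^2 * s^2 := by gcongr
        _ = (2*π*s)^2 := by ring
    linarith

lemma perron_key (σ : ℝ) (hσ : 1 < σ) {ξ : ℝ} (hξ : 0 < ξ) :
    (1 / (2 * (Real.pi:ℂ))) * (∫ t : ℝ,
        (ξ : ℂ) ^ ((σ : ℂ) + t * Complex.I) / ((σ : ℂ) + t * Complex.I)^2)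
      = ((max (Real.log ξ) 0 : ℝ) : ℂ) := by
  have hσ0 : 0 < σ := by linarith
  set u := Real.log ξ with hu
  set h : ℝ → ℂ := fun t =>
    Complex.exp ((u:ℂ) * ((σ:ℂ) + t * Complex.I)) / ((σ:ℂ) + t * Complex.I)^2 with hh
  have hfun : (fun t : ℝ => (ξ : ℂ) ^ ((σ : ℂ) + t * Complex.I)
      / ((σ : ℂ) + t * Complex.I)^2) = h := by
    funext t
    rw [hh]
    congr 1
    rw [Complex.cpow_def_of_ne_zero (by exact_mod_cast hξ.ne' : (ξ:ℂ) ≠ 0),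
      ← Complex.ofReal_log hξ.le]
  have hcv := MeasureTheory.Measure.integral_comp_mul_left h (2*π)
  have habs : |(2*π)⁻¹| = (2*π)⁻¹ := abs_of_pos (by positivity)
  have step1 : (1 / (2 * (Real.pi:ℂ))) * (∫ t : ℝ, h t) = ∫ x : ℝ, h (2*π*x) := by
    rw [hcv, habs, Complex.real_smul]
    push_cast
    ring
  have hpt : ∀ x : ℝ, h (2*π*x) = Complex.exp ((σ*u : ℝ)) *
      (Complex.exp (((2*π*(x*u) : ℝ)) * Complex.I) • 𝓕 (perronF σ) x) := by
    intro x
    rw [perronF_fourier σ hσ0 x, smul_eq_mul, hh]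
    have harg : (u:ℂ) * ((σ:ℂ) + ((2*π*x : ℝ):ℂ) * Complex.I)
        = ((σ*u : ℝ):ℂ) + ((2*π*(x*u) : ℝ):ℂ) * Complex.I := by push_cast; ring
    simp only
    rw [harg, Complex.exp_add]
    have hden : ((σ:ℂ) + ((2*π*x : ℝ):ℂ) * Complex.I)^2
        = ((σ:ℂ) + 2*(π:ℂ)*(x:ℂ)*Complex.I)^2 := by push_cast; ring
    rw [hden]
    ring
  have step2 : (∫ x : ℝ, h (2*π*x)) = Complex.exp ((σ*u : ℝ)) *
      𝓕⁻ (𝓕 (perronF σ)) u := by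
    simp_rw [hpt]
    rw [MeasureTheory.integral_const_mul]
    congr 1
    rw [Real.fourierInv_eq']
    congr 1
    funext a
    simp [mul_comm]
  have hinv : 𝓕⁻ (𝓕 (perronF σ)) u = perronF σ u :=
    (perronF_integrable σ hσ0).fourierInv_fourier_eq
      (perronF_fourier_integrable σ hσ.le) ((perronF_continuous σ).continuousAt)
  rw [hfun, step1, step2, hinv]
  unfold perronF
  rw [show Complex.exp ((σ*u : ℝ)) * (((max u 0 : ℝ):ℂ) * Complex.exp (-((σ:ℂ) * u)))
    = ((max u 0 : ℝ):ℂ) * (Complex.exp ((σ*u : ℝ)) * Complex.exp (-((σ:ℂ) * u))) from by ring,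
    ← Complex.exp_add]
  norm_num

open Complex in

/-- Perron-type formula: `(1/(2πi)) ∫_{(σ)} ξ^s/s² ds = log ξ` for `ξ ≥ 1`, and `0`
for `0 < ξ ≤ 1`. -/
theorem perron_log_integral (σ : ℝ) (hσ : 1 < σ) (ξ : ℝ) :
    (1 ≤ ξ →
      (1 / (2 * Real.pi)) * ∫ t : ℝ,
          (ξ : ℂ) ^ ((σ : ℂ) + t * Complex.I) / ((σ : ℂ) + t * Complex.I)^2
        = (Real.log ξ : ℝ)) ∧
    (0 < ξ → ξ ≤ 1 →
      (1 / (2 * Real.pi)) * ∫ t : ℝ,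
          (ξ : ℂ) ^ ((σ : ℂ) + t * Complex.I) / ((σ : ℂ) + t * Complex.I)^2
        = 0) := by
  constructor
  · intro hξ1
    have hξ : 0 < ξ := lt_of_lt_of_le one_pos hξ1
    have h := perron_key σ hσ hξ
    rw [max_eq_left (Real.log_nonneg hξ1)] at h
    exact h
  · intro hξ hξ1
    have h := perron_key σ hσ hξ
    rw [max_eq_right (Real.log_nonpos hξ.le hξ1)] at h
    simpa using h
end

section
/- Mean value theorem for Dirichlet polynomials: if D(s) = Σ_{n=1}^N d_n n^{−s} with complex coefficients d_n, then for T ≥ 0, ∫₀^T |D(it)|² dt = T·Σ_{n=1}^N |d_n|² + O(N·Σ_{n=1}^N |d_n|²), with an absolute implied constant. -/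
open Real Complex MeasureTheory Finset
open Matrix

namespace DMV


noncomputable def cm (lam : Fin K → ℝ) (r s : Fin K) : ℝ :=
  if r = s then 0 else 1 / (lam r - lam s)

lemma cm_skew (lam : Fin K → ℝ) (r s : Fin K) : cm lam r s = - cm lam s r := by
  unfold cm
  rcases eq_or_ne r s with h | h
  · simp [h]
  · rw [if_neg h, if_neg h.symm, one_div, one_div, ← inv_neg, neg_sub]

lemma cm_mul (lam : Fin K → ℝ) (hinj : ∀ r s : Fin K, r ≠ s → lam r ≠ lam s)
    {s t : Fin K} (hst : s ≠ t) (r : Fin K) :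
    cm lam r s * cm lam r t = cm lam s t * (cm lam r s - cm lam r t)
      + (if r = s then (cm lam s t)^2 else 0) + (if r = t then (cm lam s t)^2 else 0) := by
  rcases eq_or_ne r s with rs | rs
  · subst rs
    have h0 : cm lam r r = 0 := by simp [cm]
    rw [if_pos rfl, if_neg hst, h0]
    ring
  rcases eq_or_ne r t with rt | rt
  · subst rt
    have h0 : cm lam r r = 0 := by simp [cm]
    rw [if_neg rs, if_pos rfl, h0, cm_skew lam r s]
    ring
  · rw [if_neg rs, if_neg rt]
    have h1 : lam r - lam s ≠ 0 := sub_ne_zero.2 (hinj r s rs)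
    have h2 : lam r - lam t ≠ 0 := sub_ne_zero.2 (hinj r t rt)
    have h3 : lam s - lam t ≠ 0 := sub_ne_zero.2 (hinj s t hst)
    simp only [cm, if_neg rs, if_neg rt, if_neg hst]
    field_simp
    try ring

lemma sum_cm_mul (lam : Fin K → ℝ) (hinj : ∀ r s : Fin K, r ≠ s → lam r ≠ lam s)
    (s t : Fin K) :
    ∑ r, cm lam r s * cm lam r t =
      cm lam s t * ((∑ r, cm lam r s) - ∑ r, cm lam r t) + 2*(cm lam s t)^2
        + (if s = t then ∑ r, (cm lam r s)^2 else 0) := by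
  rcases eq_or_ne s t with h | h
  · subst h
    simp only [if_pos rfl, cm, sub_self, mul_zero, zero_mul, sub_self]
    have : ∀ r : Fin K, cm lam r s * cm lam r s = (cm lam r s)^2 := fun r => (sq _).symm
    simp [cm, sq]
    apply Finset.sum_congr rfl
    intro x _
    by_cases hx : x = s <;> simp [hx]
  · rw [if_neg h]
    rw [Finset.sum_congr rfl (fun r _ => cm_mul lam hinj h r)]
    rw [Finset.sum_add_distrib, Finset.sum_add_distrib, Finset.sum_ite_eq' Finset.univ s,
      Finset.sum_ite_eq' Finset.univ t, if_pos (Finset.mem_univ s), if_pos (Finset.mem_univ t),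
      ← Finset.mul_sum, Finset.sum_sub_distrib]
    ring


lemma eigen_bound (lam : Fin K → ℝ) (hinj : ∀ r s : Fin K, r ≠ s → lam r ≠ lam s)
    (Q : ℝ) (hQ : ∀ s, ∑ r, (cm lam r s)^2 ≤ Q)
    (w : Fin K → ℂ) (μ : ℝ)
    (heig : ∀ r, ∑ s, ((cm lam r s : ℝ) : ℂ) * w s = (-(μ:ℂ)*Complex.I) * w r) :
    μ^2 * ∑ s, Complex.normSq (w s) ≤ 3 * Q * ∑ s, Complex.normSq (w s) := by
  classical
  set ν : ℂ := -(μ:ℂ)*Complex.I with hνdef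
  have hνconj : (starRingEnd ℂ) ν = -ν := by
    simp [hνdef]
  have hν2 : Complex.normSq ν = μ^2 := by
    simp [hνdef, Complex.normSq_mul, Complex.normSq_I, sq]
  set c' : Fin K → Fin K → ℂ := fun r s => ((cm lam r s : ℝ) : ℂ) with hc'
  set a : Fin K → ℝ := fun s => ∑ r, cm lam r s with ha
  set q : Fin K → ℝ := fun s => ∑ r, (cm lam r s)^2 with hq
  have hqnonneg : ∀ s, 0 ≤ q s := fun s => Finset.sum_nonneg (fun r _ => sq_nonneg _)
  have hconj_c : ∀ r s, (starRingEnd ℂ) (c' r s) = c' r s := fun r s => Complex.conj_ofReal _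
  have hskew : ∀ r s, c' r s = - c' s r := by
    intro r s; simp only [hc']; rw [cm_skew lam r s]; push_cast; ring
  have heig_conj : ∀ r, ∑ s, c' r s * (starRingEnd ℂ) (w s)
      = (starRingEnd ℂ) (ν * w r) := by
    intro r
    rw [← heig r, _root_.map_sum]
    apply Finset.sum_congr rfl; intro s _
    rw [_root_.map_mul, hconj_c]
  have heig_col : ∀ t, ∑ s, c' s t * w s = -(ν * w t) := by
    intro t
    calc ∑ s, c' s t * w s = ∑ s, -(c' t s * w s) := by
          apply Finset.sum_congr rfl; intro s _; rw [hskew s t]; ring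
      _ = -(ν * w t) := by rw [Finset.sum_neg_distrib, heig t]
  -- the double-sum identity
  have hA : ∀ s t, (∑ r, c' r s * c' r t)
      = c' s t * (((a s : ℝ):ℂ) - ((a t : ℝ):ℂ)) + 2*(c' s t)^2
        + (if s = t then ((q s : ℝ) : ℂ) else 0) := by
    intro s t
    have h1 : (∑ r, c' r s * c' r t) = ((∑ r, cm lam r s * cm lam r t : ℝ) : ℂ) := by
      push_cast [hc']; rfl
    rw [h1, sum_cm_mul lam hinj s t]
    simp only [hc', ha, hq]
    push_cast [apply_ite (fun x : ℝ => (x : ℂ))]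
    try ring
    try (split <;> ring)
  -- S computed two ways
  have step1 : ∀ r, ∑ s, ∑ t, (w s * (starRingEnd ℂ) (w t)) * (c' r s * c' r t)
      = (Complex.normSq (w r) : ℂ) * (μ^2 : ℝ) := by
    intro r
    have h2 : ∑ s, ∑ t, (w s * (starRingEnd ℂ) (w t)) * (c' r s * c' r t)
        = (∑ s, c' r s * w s) * (∑ t, c' r t * (starRingEnd ℂ) (w t)) := by
      rw [Finset.sum_mul_sum]
      apply Finset.sum_congr rfl; intro s _
      apply Finset.sum_congr rfl; intro t _
      ring
    rw [h2, heig r, heig_conj r, Complex.mul_conj, Complex.normSq_mul, hν2]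
    push_cast
    ring
  have step2 : ∑ s, ∑ t, (w s * (starRingEnd ℂ) (w t)) * (∑ r, c' r s * c' r t)
      = ((μ^2 : ℝ) : ℂ) * ((∑ s, Complex.normSq (w s) : ℝ) : ℂ) := by
    have h1 : ∀ s : Fin K, ∑ t, (w s * (starRingEnd ℂ) (w t)) * (∑ r, c' r s * c' r t)
        = ∑ r, ∑ t, (w s * (starRingEnd ℂ) (w t)) * (c' r s * c' r t) := by
      intro s
      rw [Finset.sum_comm]
      apply Finset.sum_congr rfl; intro t _
      rw [Finset.mul_sum]
    have swap : ∑ s, ∑ t, (w s * (starRingEnd ℂ) (w t)) * (∑ r, c' r s * c' r t)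
        = ∑ r, ∑ s, ∑ t, (w s * (starRingEnd ℂ) (w t)) * (c' r s * c' r t) := by
      rw [Finset.sum_congr rfl (fun s _ => h1 s), Finset.sum_comm]
    rw [swap, Finset.sum_congr rfl (fun r _ => step1 r)]
    push_cast
    rw [← Finset.sum_mul]
    ring
  -- substitute hA and split
  set A : ℂ := ∑ s, ((a s : ℝ):ℂ) * ((Complex.normSq (w s) : ℝ):ℂ) with hAdef
  have hwc : ∀ s, w s * (starRingEnd ℂ) (w s) = ((Complex.normSq (w s) : ℝ):ℂ) :=
    fun s => Complex.mul_conj (w s)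
  have hE1 : ∑ s, ∑ t, (w s * (starRingEnd ℂ) (w t)) * (c' s t * ((a s : ℝ):ℂ))
      = -ν * A := by
    calc ∑ s, ∑ t, (w s * (starRingEnd ℂ) (w t)) * (c' s t * ((a s : ℝ):ℂ))
        = ∑ s, (w s * ((a s : ℝ):ℂ)) * (∑ t, c' s t * (starRingEnd ℂ) (w t)) := by
          apply Finset.sum_congr rfl; intro s _
          rw [Finset.mul_sum]
          apply Finset.sum_congr rfl; intro t _; ring
      _ = ∑ s, (w s * ((a s : ℝ):ℂ)) * ((starRingEnd ℂ) (ν * w s)) := by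
          apply Finset.sum_congr rfl; intro s _; rw [heig_conj s]
      _ = -ν * A := by
          rw [hAdef, Finset.mul_sum]
          apply Finset.sum_congr rfl; intro s _
          rw [_root_.map_mul, hνconj, ← hwc s]
          ring
  have hE2 : ∑ s, ∑ t, (w s * (starRingEnd ℂ) (w t)) * (c' s t * ((a t : ℝ):ℂ))
      = -ν * A := by
    calc ∑ s, ∑ t, (w s * (starRingEnd ℂ) (w t)) * (c' s t * ((a t : ℝ):ℂ))
        = ∑ t, ∑ s, (w s * (starRingEnd ℂ) (w t)) * (c' s t * ((a t : ℝ):ℂ)) :=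
          Finset.sum_comm
      _ = ∑ t, ((starRingEnd ℂ) (w t) * ((a t : ℝ):ℂ)) * (∑ s, c' s t * w s) := by
          apply Finset.sum_congr rfl; intro t _
          rw [Finset.mul_sum]
          apply Finset.sum_congr rfl; intro s _; ring
      _ = -ν * A := by
          rw [hAdef, Finset.mul_sum]
          apply Finset.sum_congr rfl; intro t _
          rw [heig_col t, ← hwc t]
          ring
  have hEd : ∑ s, ∑ t, (w s * (starRingEnd ℂ) (w t)) * (if s = t then ((q s : ℝ):ℂ) else 0)
      = ∑ s, ((Complex.normSq (w s) : ℝ):ℂ) * ((q s:ℝ):ℂ) := by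
    apply Finset.sum_congr rfl; intro s _
    rw [Finset.sum_eq_single s]
    · rw [if_pos rfl, ← hwc s]
    · intro t _ hts; rw [if_neg (Ne.symm hts), mul_zero]
    · intro h; exact absurd (Finset.mem_univ s) h
  set Eb : ℂ := ∑ s, ∑ t, (w s * (starRingEnd ℂ) (w t)) * (c' s t)^2 with hEb
  have main : ((μ^2 : ℝ) : ℂ) * ((∑ s, Complex.normSq (w s) : ℝ) : ℂ)
      = 2 * Eb + ∑ s, ((Complex.normSq (w s) : ℝ):ℂ) * ((q s:ℝ):ℂ) := by
    rw [← step2]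
    calc ∑ s, ∑ t, (w s * (starRingEnd ℂ) (w t)) * (∑ r, c' r s * c' r t)
        = ∑ s, ∑ t, ((w s * (starRingEnd ℂ) (w t)) * (c' s t * ((a s : ℝ):ℂ))
            - (w s * (starRingEnd ℂ) (w t)) * (c' s t * ((a t : ℝ):ℂ))
            + 2 * ((w s * (starRingEnd ℂ) (w t)) * (c' s t)^2)
            + (w s * (starRingEnd ℂ) (w t)) * (if s = t then ((q s : ℝ):ℂ) else 0)) := by
          apply Finset.sum_congr rfl; intro s _
          apply Finset.sum_congr rfl; intro t _
          rw [hA s t]; ring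
      _ = 2 * Eb + ∑ s, ((Complex.normSq (w s) : ℝ):ℂ) * ((q s:ℝ):ℂ) := by
          simp only [Finset.sum_add_distrib, Finset.sum_sub_distrib]
          rw [hE1, hE2, hEd]
          have h2s : ∑ s, ∑ t, 2 * ((w s * (starRingEnd ℂ) (w t)) * (c' s t)^2) = 2 * Eb := by
            rw [hEb, Finset.mul_sum]
            apply Finset.sum_congr rfl; intro s _
            rw [Finset.mul_sum]
          rw [h2s]
          ring
  -- take real parts and bound
  set Dr : ℝ := ∑ s, Complex.normSq (w s) * q s with hDr
  have hDrC : ∑ s, ((Complex.normSq (w s) : ℝ):ℂ) * ((q s:ℝ):ℂ) = ((Dr : ℝ) : ℂ) := by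
    rw [hDr]; push_cast; rfl
  have mainre : μ^2 * ∑ s, Complex.normSq (w s) = 2 * Eb.re + Dr := by
    have h := main
    rw [hDrC, ← Complex.ofReal_mul] at h
    have h2 := congrArg Complex.re h
    simpa [← Complex.ofReal_pow] using h2
  have hcmsq : ∀ s t : Fin K, (c' s t)^2 = (((cm lam s t)^2 : ℝ) : ℂ) := by
    intro s t; simp [hc']
  have h2Eb : 2 * Eb.re ≤ 2 * Dr := by
    have hre : Eb.re = ∑ s, ∑ t, ((w s * (starRingEnd ℂ) (w t)) * (c' s t)^2).re := by
      rw [hEb, Complex.re_sum]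
      exact Finset.sum_congr rfl fun s _ => Complex.re_sum _ _
    have hstep : ∀ s t : Fin K, 2 * ((w s * (starRingEnd ℂ) (w t)) * (c' s t)^2).re
        ≤ (Complex.normSq (w s) + Complex.normSq (w t)) * (cm lam s t)^2 := by
      intro s t
      rw [hcmsq s t]
      have hx : (0:ℝ) ≤ (cm lam s t)^2 := sq_nonneg _
      have h1 : ((w s * (starRingEnd ℂ) (w t)) * (((cm lam s t)^2 : ℝ):ℂ)).re
          = (w s * (starRingEnd ℂ) (w t)).re * (cm lam s t)^2 := by
        rw [mul_comm, Complex.re_ofReal_mul]; ring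
      rw [h1]
      have h2 : (w s * (starRingEnd ℂ) (w t)).re ≤ ‖w s‖ * ‖w t‖ := by
        calc (w s * (starRingEnd ℂ) (w t)).re ≤ ‖w s * (starRingEnd ℂ) (w t)‖ :=
              Complex.re_le_norm _
          _ = ‖w s‖ * ‖w t‖ := by
              rw [norm_mul, Complex.norm_conj]
      have h3 : 2 * (‖w s‖ * ‖w t‖)
          ≤ Complex.normSq (w s) + Complex.normSq (w t) := by
        rw [← Complex.sq_norm, ← Complex.sq_norm]
        nlinarith [sq_nonneg (‖w s‖ - ‖w t‖)]
      nlinarith [norm_nonneg (w s), norm_nonneg (w t)]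
    calc 2 * Eb.re = ∑ s, ∑ t, 2 * ((w s * (starRingEnd ℂ) (w t)) * (c' s t)^2).re := by
          rw [hre, Finset.mul_sum]
          exact Finset.sum_congr rfl fun s _ => Finset.mul_sum _ _ _
      _ ≤ ∑ s, ∑ t, (Complex.normSq (w s) + Complex.normSq (w t)) * (cm lam s t)^2 :=
          Finset.sum_le_sum fun s _ => Finset.sum_le_sum fun t _ => hstep s t
      _ = 2 * Dr := by
          have expand : ∀ s t : Fin K, (Complex.normSq (w s) + Complex.normSq (w t)) * (cm lam s t)^2
              = Complex.normSq (w s) * (cm lam s t)^2 + Complex.normSq (w t) * (cm lam s t)^2 := by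
            intro s t; ring
          simp only [expand, Finset.sum_add_distrib]
          have hS1 : ∑ s, ∑ t, Complex.normSq (w s) * (cm lam s t)^2 = Dr := by
            rw [hDr]
            apply Finset.sum_congr rfl; intro s _
            rw [← Finset.mul_sum]
            congr 1
            rw [hq]
            apply Finset.sum_congr rfl; intro t _
            rw [cm_skew lam s t]; ring
          have hS2 : ∑ s, ∑ t, Complex.normSq (w t) * (cm lam s t)^2 = Dr := by
            rw [Finset.sum_comm, hDr]
            apply Finset.sum_congr rfl; intro t _
            rw [← Finset.mul_sum]
          rw [hS1, hS2]
          ring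
  have hDrQ : Dr ≤ Q * ∑ s, Complex.normSq (w s) := by
    rw [hDr, Finset.mul_sum]
    apply Finset.sum_le_sum
    intro s _
    rw [mul_comm (Q : ℝ) _]
    exact mul_le_mul_of_nonneg_left (hQ s) (Complex.normSq_nonneg _)
  calc μ^2 * ∑ s, Complex.normSq (w s) = 2 * Eb.re + Dr := mainre
    _ ≤ 2 * Dr + Dr := by linarith
    _ = 3 * Dr := by ring
    _ ≤ 3 * (Q * ∑ s, Complex.normSq (w s)) := by linarith
    _ = 3 * Q * ∑ s, Complex.normSq (w s) := by ring


lemma hilbert_bilinear (lam : Fin K → ℝ) (hinj : ∀ r s : Fin K, r ≠ s → lam r ≠ lam s)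
    (Q : ℝ) (hQ0 : 0 ≤ Q) (hQ : ∀ s, ∑ r, (cm lam r s)^2 ≤ Q)
    (u : Fin K → ℂ) :
    ‖∑ r, ∑ s, (starRingEnd ℂ) (u r) * ((cm lam r s : ℝ):ℂ) * u s‖
      ≤ Real.sqrt (3*Q) * ∑ r, Complex.normSq (u r) := by
  classical
  set M : Matrix (Fin K) (Fin K) ℂ :=
    Matrix.of (fun r s => Complex.I * ((cm lam r s : ℝ):ℂ)) with hMdef
  have hM : M.IsHermitian := by
    rw [Matrix.IsHermitian]
    ext r s
    rw [Matrix.conjTranspose_apply, hMdef, Matrix.of_apply, Matrix.of_apply, cm_skew lam s r]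
    push_cast
    simp [Complex.star_def, _root_.map_mul, Complex.conj_I, Complex.conj_ofReal]
  -- eigenvalue bound
  have heval : ∀ j, |hM.eigenvalues j| ≤ Real.sqrt (3*Q) := by
    intro j
    set w : Fin K → ℂ := ⇑(hM.eigenvectorBasis j) with hwdef
    set μ : ℝ := hM.eigenvalues j with hμdef
    have hmv := hM.mulVec_eigenvectorBasis j
    have heig : ∀ r, ∑ s, ((cm lam r s : ℝ) : ℂ) * w s = (-(μ:ℂ)*Complex.I) * w r := by
      intro r
      have h := congrFun hmv r
      simp only [Matrix.mulVec, dotProduct, Matrix.of_apply, Pi.smul_apply, hMdef] at h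
      have h2 : Complex.I * ∑ s, ((cm lam r s : ℝ):ℂ) * w s = (μ:ℂ) * w r := by
        rw [Finset.mul_sum]
        rw [show ∑ s, Complex.I * (((cm lam r s : ℝ):ℂ) * w s)
            = ∑ s, Complex.I * ((cm lam r s : ℝ):ℂ) * w s from
          Finset.sum_congr rfl fun s _ => by ring]
        rw [h]
        simp [Complex.real_smul, hwdef, hμdef]
      have h3 := congrArg (fun z => -Complex.I * z) h2
      rw [← mul_assoc] at h3
      simp only [neg_mul, Complex.I_mul_I, neg_neg, one_mul] at h3
      rw [h3]
      ring
    have hw1 : ‖hM.eigenvectorBasis j‖ = 1 := hM.eigenvectorBasis.orthonormal.1 j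
    have hnorm : ∑ s, Complex.normSq (w s) = 1 := by
      have h := EuclideanSpace.norm_eq (hM.eigenvectorBasis j)
      rw [hw1] at h
      have h2 : ∑ s, ‖w s‖^2 = 1 := by
        rw [← Real.sqrt_eq_one]
        exact h.symm
      rw [← h2]
      exact Finset.sum_congr rfl fun s _ => by
        rw [Complex.normSq_eq_norm_sq]
    have hb := eigen_bound lam hinj Q hQ w μ heig
    rw [hnorm, mul_one, mul_one] at hb
    have habs : |μ| = Real.sqrt (μ^2) := (Real.sqrt_sq_eq_abs μ).symm
    rw [habs]
    exact Real.sqrt_le_sqrt hb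
  -- spectral theorem
  set U : Matrix (Fin K) (Fin K) ℂ :=
    (Matrix.IsHermitian.eigenvectorUnitary hM : Matrix (Fin K) (Fin K) ℂ) with hUdef
  have hUU : U * star U = 1 := (Matrix.mem_unitaryGroup_iff).mp
    (Matrix.IsHermitian.eigenvectorUnitary hM).2
  set D : Matrix (Fin K) (Fin K) ℂ :=
    Matrix.diagonal (RCLike.ofReal ∘ hM.eigenvalues) with hDdef
  set y : Fin K → ℂ := (star U) *ᵥ u with hydef
  have hstary : star y = star u ᵥ* U := by
    rw [hydef, Matrix.star_mulVec, Matrix.star_eq_conjTranspose,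
      Matrix.conjTranspose_conjTranspose]
  have hdot : dotProduct (star u) (M *ᵥ u) = dotProduct (star y) (D *ᵥ y) := by
    conv_lhs => rw [hM.spectral_theorem, Unitary.conjStarAlgAut_apply]
    rw [← hUdef, ← hDdef]
    rw [show (U * D * star U) *ᵥ u = U *ᵥ (D *ᵥ ((star U) *ᵥ u)) by
      simp [Matrix.mulVec_mulVec, Matrix.mul_assoc]]
    rw [← hydef, Matrix.dotProduct_mulVec, ← hstary]
  have hyy : ∑ i, Complex.normSq (y i) = ∑ i, Complex.normSq (u i) := by
    have h1 : dotProduct (star y) y = dotProduct (star u) u := by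
      rw [hstary, hydef, Matrix.dotProduct_mulVec, Matrix.vecMul_vecMul, hUU,
        Matrix.vecMul_one]
    have h2 : ∀ v : Fin K → ℂ, dotProduct (star v) v
        = ((∑ i, Complex.normSq (v i) : ℝ) : ℂ) := by
      intro v
      rw [dotProduct]
      push_cast
      exact Finset.sum_congr rfl fun i _ => by
        rw [Pi.star_apply, Complex.star_def, mul_comm, Complex.mul_conj]
    rw [h2, h2] at h1
    exact_mod_cast h1
  -- bound the diagonal form
  have hDbound : ‖dotProduct (star y) (D *ᵥ y)‖
      ≤ Real.sqrt (3*Q) * ∑ i, Complex.normSq (y i) := by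
    rw [dotProduct]
    calc ‖∑ i, star y i * (D *ᵥ y) i‖
        ≤ ∑ i, ‖star y i * (D *ᵥ y) i‖ := by
          exact norm_sum_le _ _
      _ ≤ ∑ i, Real.sqrt (3*Q) * Complex.normSq (y i) := by
          apply Finset.sum_le_sum
          intro i _
          rw [hDdef, Matrix.mulVec_diagonal]
          rw [Pi.star_apply, norm_mul, norm_mul]
          rw [Complex.star_def, Complex.norm_conj]
          have : ‖((RCLike.ofReal ∘ hM.eigenvalues) i : ℂ)‖ = |hM.eigenvalues i| := by
            simp [Function.comp]
          rw [this]
          have hsq : ‖y i‖ * (|hM.eigenvalues i| * ‖y i‖)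
              = |hM.eigenvalues i| * Complex.normSq (y i) := by
            rw [Complex.normSq_eq_norm_sq]; ring
          rw [hsq]
          exact mul_le_mul_of_nonneg_right (heval i) (Complex.normSq_nonneg _)
      _ = Real.sqrt (3*Q) * ∑ i, Complex.normSq (y i) := by rw [Finset.mul_sum]
  -- relate target to dotProduct
  have hform : ∑ r, ∑ s, (starRingEnd ℂ) (u r) * ((cm lam r s : ℝ):ℂ) * u s
      = -Complex.I * dotProduct (star u) (M *ᵥ u) := by
    rw [dotProduct]
    rw [Finset.mul_sum]
    apply Finset.sum_congr rfl
    intro r _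
    rw [Matrix.mulVec, dotProduct, Finset.mul_sum, Finset.mul_sum]
    apply Finset.sum_congr rfl
    intro s _
    rw [Pi.star_apply, Complex.star_def, hMdef, Matrix.of_apply]
    ring_nf
    rw [Complex.I_sq]
    ring
  rw [hform, norm_mul]
  have : ‖-Complex.I‖ = 1 := by simp
  rw [this, one_mul, hdot]
  calc ‖dotProduct (star y) (D *ᵥ y)‖
      ≤ Real.sqrt (3*Q) * ∑ i, Complex.normSq (y i) := hDbound
    _ = Real.sqrt (3*Q) * ∑ i, Complex.normSq (u i) := by rw [hyy]


lemma sum_inv_sq_le : ∀ N : ℕ, 1 ≤ N → ∑ k ∈ Finset.Icc 1 N, (1:ℝ)/(k:ℝ)^2 ≤ 2 - 1/N := by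
  intro N hN
  induction N, hN using Nat.le_induction with
  | base => norm_num
  | succ n hn ih =>
    rw [Finset.sum_Icc_succ_top (by omega : 1 ≤ n + 1)]
    have h1 : (1:ℝ)/((n+1:ℕ):ℝ)^2 ≤ 1/(n:ℝ) - 1/((n:ℝ)+1) := by
      have hn0 : (0:ℝ) < n := by exact_mod_cast hn
      rw [div_sub_div _ _ (ne_of_gt hn0) (by positivity)]
      rw [div_le_div_iff₀ (by positivity) (by positivity)]
      push_cast
      ring_nf
      nlinarith [hn0]
    have h2 := ih
    push_cast at h1 ⊢
    linarith

lemma sum_inv_sq_le' (N : ℕ) : ∑ k ∈ Finset.Icc 1 N, (1:ℝ)/(k:ℝ)^2 ≤ 2 := by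
  rcases Nat.eq_zero_or_pos N with h | h
  · subst h; simp
  · have := sum_inv_sq_le N h
    have h0 : (0:ℝ) ≤ 1/N := by positivity
    linarith

lemma log_gap {N a b : ℕ} (h1 : 1 ≤ b) (h2 : b < a) (h3 : a ≤ N) :
    ((a:ℝ) - b)/N ≤ Real.log a - Real.log b := by
  have hb : (0:ℝ) < b := by exact_mod_cast h1
  have ha : (0:ℝ) < a := lt_trans hb (by exact_mod_cast h2)
  have hN : (0:ℝ) < N := lt_of_lt_of_le ha (by exact_mod_cast h3)
  have key : Real.log ((b:ℝ)/a) ≤ (b:ℝ)/a - 1 := Real.log_le_sub_one_of_pos (by positivity)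
  rw [Real.log_div (ne_of_gt hb) (ne_of_gt ha)] at key
  have h5 : ((a:ℝ) - b)/N ≤ 1 - (b:ℝ)/a := by
    rw [show (1 : ℝ) - (b:ℝ)/a = ((a:ℝ) - b)/a by field_simp]
    gcongr
    all_goals try linarith [show (b:ℝ) < a from by exact_mod_cast h2]
    all_goals exact_mod_cast h3
  linarith


lemma cm_sq_bound_ordered {N : ℕ} {r s : Fin N} (h : s.val < r.val) :
    (cm (fun i : Fin N => Real.log (i.val + 1)) r s)^2
      ≤ (N:ℝ)^2 * (1/((r.val - s.val : ℕ):ℝ)^2) := by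
  have hrs : r ≠ s := fun he => by rw [he] at h; exact lt_irrefl _ h
  have hb1 : 1 ≤ s.val + 1 := by omega
  have hba : s.val + 1 < r.val + 1 := by omega
  have haN : r.val + 1 ≤ N := r.isLt
  have hgap := log_gap (N := N) hb1 hba haN
  set Δ : ℝ := Real.log (r.val + 1) - Real.log (s.val + 1) with hΔdef
  set k : ℝ := ((r.val - s.val : ℕ):ℝ) with hkdef
  have hNpos : 0 < (N:ℝ) := by
    have : 0 < N := by omega
    exact_mod_cast this
  have hkpos : 0 < k := by
    rw [hkdef]
    have : 1 ≤ r.val - s.val := by omega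
    exact_mod_cast Nat.lt_of_lt_of_le Nat.zero_lt_one this
  have hΔge : k/(N:ℝ) ≤ Δ := by
    have hcast : ((r.val + 1 : ℕ):ℝ) - ((s.val + 1 : ℕ):ℝ) = k := by
      rw [hkdef]; push_cast [Nat.cast_sub (le_of_lt h)]; ring
    have : (((r.val + 1 : ℕ):ℝ) - ((s.val + 1 : ℕ):ℝ))/(N:ℝ)
        ≤ Real.log ((r.val + 1 : ℕ)) - Real.log ((s.val + 1 : ℕ)) := hgap
    rw [hcast] at this
    convert this using 2 <;> push_cast <;> ring
  have hΔpos : 0 < Δ := lt_of_lt_of_le (by positivity) hΔge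
  have hcm : cm (fun i : Fin N => Real.log (i.val + 1)) r s = 1/Δ := by
    unfold cm
    rw [if_neg hrs, hΔdef]
  rw [hcm, div_pow, one_pow]
  have h2 : (k/(N:ℝ))^2 ≤ Δ^2 := by
    apply mul_self_le_mul_self (by positivity) hΔge |>.trans_eq (sq Δ).symm |>.trans_eq' (sq _).symm
  calc 1/Δ^2 ≤ 1/((k/(N:ℝ))^2) := by
        apply one_div_le_one_div_of_le (by positivity) h2
    _ = (N:ℝ)^2 * (1/k^2) := by field_simp

lemma branch_bound {N : ℕ} (B : Finset (Fin N)) (d : Fin N → ℕ) (f : Fin N → ℝ)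
    (hinj : Set.InjOn d B) (hd : ∀ r ∈ B, 1 ≤ d r ∧ d r ≤ N)
    (hf : ∀ r ∈ B, f r ≤ (N:ℝ)^2 * (1/((d r : ℕ):ℝ)^2)) :
    ∑ r ∈ B, f r ≤ 2*(N:ℝ)^2 := by
  calc ∑ r ∈ B, f r ≤ ∑ r ∈ B, (N:ℝ)^2 * (1/((d r):ℝ)^2) := Finset.sum_le_sum hf
    _ = ∑ k ∈ B.image d, (N:ℝ)^2 * (1/(k:ℝ)^2) := by
        rw [Finset.sum_image (fun x hx y hy hxy => hinj hx hy hxy)]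
    _ ≤ ∑ k ∈ Finset.Icc 1 N, (N:ℝ)^2 * (1/(k:ℝ)^2) := by
        apply Finset.sum_le_sum_of_subset_of_nonneg
        · intro k hk
          rw [Finset.mem_image] at hk
          obtain ⟨r, hr, rfl⟩ := hk
          rw [Finset.mem_Icc]
          exact hd r hr
        · intro k _ _
          positivity
    _ = (N:ℝ)^2 * ∑ k ∈ Finset.Icc 1 N, 1/(k:ℝ)^2 := by rw [← Finset.mul_sum]
    _ ≤ (N:ℝ)^2 * 2 := by
        apply mul_le_mul_of_nonneg_left (sum_inv_sq_le' N) (by positivity)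
    _ = 2*(N:ℝ)^2 := by ring

lemma hQ_log (N : ℕ) (s : Fin N) :
    ∑ r, (cm (fun i : Fin N => Real.log (i.val + 1)) r s)^2 ≤ 4*(N:ℝ)^2 := by
  classical
  set lam := fun i : Fin N => Real.log (i.val + 1) with hlam
  set f : Fin N → ℝ := fun r => (cm lam r s)^2 with hf
  have hsplit := Finset.sum_filter_add_sum_filter_not Finset.univ
    (fun r : Fin N => r.val < s.val) f
  have hB1 : ∑ r ∈ Finset.univ.filter (fun r : Fin N => r.val < s.val), f r
      ≤ 2*(N:ℝ)^2 := by
    apply branch_bound _ (fun r => s.val - r.val)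
    · intro x hx y hy hxy
      simp only [Finset.coe_filter, Set.mem_setOf_eq, Finset.mem_univ, true_and] at hx hy
      have hxy' : s.val - x.val = s.val - y.val := hxy
      exact Fin.ext (by omega)
    · intro r hr
      rw [Finset.mem_filter] at hr
      have hs := s.isLt
      show 1 ≤ s.val - r.val ∧ s.val - r.val ≤ N
      omega
    · intro r hr
      rw [Finset.mem_filter] at hr
      have h1 : (cm lam r s)^2 = (cm lam s r)^2 := by
        rw [cm_skew lam r s]; ring
      rw [hf]
      simp only
      rw [h1]
      exact cm_sq_bound_ordered hr.2
  have hB2 : ∑ r ∈ Finset.univ.filter (fun r : Fin N => ¬ r.val < s.val), f r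
      ≤ 2*(N:ℝ)^2 := by
    have hsub : Finset.univ.filter (fun r : Fin N => s.val < r.val)
        ⊆ Finset.univ.filter (fun r : Fin N => ¬ r.val < s.val) := by
      intro r hr
      rw [Finset.mem_filter] at *
      exact ⟨Finset.mem_univ _, by omega⟩
    have hzero : ∀ r ∈ Finset.univ.filter (fun r : Fin N => ¬ r.val < s.val),
        r ∉ Finset.univ.filter (fun r : Fin N => s.val < r.val) → f r = 0 := by
      intro r h1 h2
      simp only [Finset.mem_filter, Finset.mem_univ, true_and, not_lt] at h1 h2
      have : r = s := Fin.ext (by omega)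
      rw [hf]; simp only
      rw [this]
      simp [cm]
    rw [← Finset.sum_subset hsub hzero]
    apply branch_bound _ (fun r => r.val - s.val)
    · intro x hx y hy hxy
      simp only [Finset.coe_filter, Set.mem_setOf_eq, Finset.mem_univ, true_and] at hx hy
      have hxy' : x.val - s.val = y.val - s.val := hxy
      exact Fin.ext (by omega)
    · intro r hr
      rw [Finset.mem_filter] at hr
      have hrl := r.isLt
      show 1 ≤ r.val - s.val ∧ r.val - s.val ≤ N
      omega
    · intro r hr
      rw [Finset.mem_filter] at hr
      rw [hf]
      simp only
      exact cm_sq_bound_ordered hr.2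
  calc ∑ r, f r = _ + _ := hsplit.symm
    _ ≤ 2*(N:ℝ)^2 + 2*(N:ℝ)^2 := add_le_add hB1 hB2
    _ = 4*(N:ℝ)^2 := by ring


lemma Icc_to_fin {β : Type*} [AddCommMonoid β] (N : ℕ) (f : ℕ → β) :
    ∑ n ∈ Finset.Icc 1 N, f n = ∑ i : Fin N, f (i.val + 1) := by
  induction N with
  | zero => simp
  | succ n ih =>
    rw [Finset.sum_Icc_succ_top (by omega : 1 ≤ n + 1), ih, Fin.sum_univ_castSucc]
    simp

lemma exp_int (T : ℝ) (e : ℂ) (he : e ≠ 0) :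
    ∫ t in (0:ℝ)..T, Complex.exp (e * t) = (Complex.exp (e * T) - 1)/e := by
  rw [integral_exp_mul_complex he]
  norm_num

lemma exp_cont (e : ℂ) : Continuous (fun t : ℝ => Complex.exp (e * t)) :=
  Complex.continuous_exp.comp (continuous_const.mul Complex.continuous_ofReal)

lemma log_ne_log {m n : ℕ} (hm : 1 ≤ m) (hn : 1 ≤ n) (hmn : m ≠ n) :
    Real.log m ≠ Real.log n := by
  have h : ∀ a b : ℕ, 1 ≤ a → a < b → Real.log a < Real.log b := by
    intro a b ha hab
    apply Real.log_lt_log (by exact_mod_cast ha) (by exact_mod_cast hab)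
  rcases Nat.lt_or_ge m n with h1 | h1
  · exact ne_of_lt (h m n hm h1)
  · have h2 : n < m := by omega
    exact (ne_of_lt (h n m hn h2)).symm


end DMV


open DMV in
/-- Mean value theorem for Dirichlet polynomials:
`∫₀^T |Σ d_n n^{−it}|² dt = T·Σ|d_n|² + O(N·Σ|d_n|²)`. -/
theorem dirichlet_mean_value :
    ∃ C : ℝ, 0 < C ∧ ∀ (N : ℕ) (d : ℕ → ℂ) (T : ℝ), 0 ≤ T →
      |(∫ t in (0:ℝ)..T,
          ‖∑ n ∈ Finset.Icc 1 N, d n * (n : ℂ) ^ (-(t : ℂ) * Complex.I)‖^2)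
        - T * ∑ n ∈ Finset.Icc 1 N, ‖d n‖^2|
      ≤ C * N * ∑ n ∈ Finset.Icc 1 N, ‖d n‖^2 := by
  refine ⟨8, by norm_num, ?_⟩
  intro N d T hT
  classical
  set c : ℕ → ℂ := fun n => -(Real.log n : ℂ) * Complex.I with hc
  set D : ℝ → ℂ := fun t => ∑ n ∈ Finset.Icc 1 N, d n * Complex.exp (c n * t) with hD
  have hconjc : ∀ n : ℕ, (starRingEnd ℂ) (c n) = (Real.log n : ℂ) * Complex.I := by
    intro n
    rw [hc]
    simp only [_root_.map_mul, _root_.map_neg, Complex.conj_I, Complex.conj_ofReal]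
    ring
  -- pointwise rewrite of the integrand
  have hpt : ∀ t : ℝ,
      ‖∑ n ∈ Finset.Icc 1 N, d n * (n : ℂ) ^ (-(t : ℂ) * Complex.I)‖^2
        = (D t * (starRingEnd ℂ) (D t)).re := by
    intro t
    have hsum : (∑ n ∈ Finset.Icc 1 N, d n * (n:ℂ)^(-(t:ℂ)*Complex.I)) = D t := by
      apply Finset.sum_congr rfl
      intro n hn
      rw [Finset.mem_Icc] at hn
      congr 1
      have hn0 : (n:ℂ) ≠ 0 := Nat.cast_ne_zero.2 (by omega)
      rw [Complex.cpow_def_of_ne_zero hn0]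
      congr 1
      have h1 : Complex.log (n:ℂ) = (Real.log n : ℂ) := by
        rw [show ((n:ℕ):ℂ) = (((n:ℝ)):ℂ) by push_cast; rfl,
          ← Complex.ofReal_log (Nat.cast_nonneg n)]
      rw [h1, hc]
      ring
    rw [hsum, Complex.sq_norm, Complex.mul_conj, Complex.ofReal_re]
  -- continuity and integrability
  have hDcont : Continuous D := by
    rw [hD]
    apply continuous_finset_sum
    intro n _
    exact continuous_const.mul (exp_cont (c n))
  have hFcont : Continuous (fun t => D t * (starRingEnd ℂ) (D t)) := by
    apply hDcont.mul
    exact Complex.continuous_conj.comp hDcont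
  have hFint : IntervalIntegrable (fun t => D t * (starRingEnd ℂ) (D t))
      MeasureTheory.volume 0 T := hFcont.intervalIntegrable 0 T
  -- the integral equals re of complex integral
  have hre : (∫ t in (0:ℝ)..T,
      ‖∑ n ∈ Finset.Icc 1 N, d n * (n : ℂ) ^ (-(t : ℂ) * Complex.I)‖^2)
      = (∫ t in (0:ℝ)..T, D t * (starRingEnd ℂ) (D t)).re := by
    rw [intervalIntegral.integral_congr (g := fun t => (D t * (starRingEnd ℂ) (D t)).re)
      (fun t _ => hpt t)]
    exact (Complex.reCLM.intervalIntegral_comp_comm hFint)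
  -- exact integral computation
  set K : ℕ → ℕ → ℂ := fun m n => if m = n then (T:ℂ) else
    (Complex.exp (Complex.I*((Real.log n:ℂ) - (Real.log m:ℂ)) * T) - 1)
      /(Complex.I*((Real.log n:ℂ) - (Real.log m:ℂ))) with hK
  have hInt : (∫ t in (0:ℝ)..T, D t * (starRingEnd ℂ) (D t))
      = ∑ m ∈ Finset.Icc 1 N, ∑ n ∈ Finset.Icc 1 N,
          (d m * (starRingEnd ℂ) (d n)) * K m n := by
    have hFexp : ∀ t : ℝ, D t * (starRingEnd ℂ) (D t)
        = ∑ m ∈ Finset.Icc 1 N, ∑ n ∈ Finset.Icc 1 N,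
            (d m * (starRingEnd ℂ) (d n))
              * Complex.exp ((Complex.I*((Real.log n:ℂ) - (Real.log m:ℂ))) * t) := by
      intro t
      rw [hD]
      simp only
      rw [_root_.map_sum, Finset.sum_mul_sum]
      apply Finset.sum_congr rfl; intro m _
      apply Finset.sum_congr rfl; intro n _
      rw [_root_.map_mul, ← Complex.exp_conj, _root_.map_mul, Complex.conj_ofReal, hconjc n]
      rw [show Complex.I*((Real.log n:ℂ) - (Real.log m:ℂ)) * t
          = c m * t + (Real.log n:ℂ)*Complex.I*t by rw [hc]; ring]
      rw [Complex.exp_add]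
      ring
    rw [intervalIntegral.integral_congr (fun t _ => hFexp t)]
    rw [intervalIntegral.integral_finset_sum (fun m _ => by
      apply Continuous.intervalIntegrable
      apply continuous_finset_sum
      intro n _
      exact continuous_const.mul (exp_cont _))]
    apply Finset.sum_congr rfl; intro m hm
    rw [intervalIntegral.integral_finset_sum (fun n _ => by
      apply Continuous.intervalIntegrable
      exact continuous_const.mul (exp_cont _))]
    apply Finset.sum_congr rfl; intro n hn
    rw [intervalIntegral.integral_const_mul]
    congr 1
    rw [Finset.mem_Icc] at hm hn
    rcases eq_or_ne m n with hmn | hmn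
    · subst hmn
      have h1 : ∀ t : ℝ, Complex.exp ((Complex.I*((Real.log m:ℂ) - (Real.log m:ℂ))) * t) = 1 := by
        intro t; simp
      rw [intervalIntegral.integral_congr (fun t _ => h1 t), intervalIntegral.integral_const,
        hK]
      simp
    · have hll : (Real.log n : ℂ) - (Real.log m : ℂ) ≠ 0 := by
        rw [sub_ne_zero]
        exact_mod_cast (log_ne_log hn.1 hm.1 (Ne.symm hmn))
      have hne : Complex.I*((Real.log n:ℂ) - (Real.log m:ℂ)) ≠ 0 :=
        mul_ne_zero Complex.I_ne_zero hll
      rw [exp_int T _ hne, hK]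
      simp only [if_neg hmn]
  -- split into diagonal and off-diagonal parts
  set Sd : ℝ := ∑ n ∈ Finset.Icc 1 N, Complex.normSq (d n) with hSd
  set Koff : ℕ → ℕ → ℂ := fun m n =>
    (Complex.exp (Complex.I*((Real.log n:ℂ) - (Real.log m:ℂ)) * T) - 1)
      /(Complex.I*((Real.log n:ℂ) - (Real.log m:ℂ))) with hKoff
  have hsplit : ∑ m ∈ Finset.Icc 1 N, ∑ n ∈ Finset.Icc 1 N,
        (d m * (starRingEnd ℂ) (d n)) * K m n
      = (T:ℂ) * (Sd:ℂ) + ∑ m ∈ Finset.Icc 1 N, ∑ n ∈ Finset.Icc 1 N,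
          (if m = n then 0 else (d m * (starRingEnd ℂ) (d n)) * Koff m n) := by
    have hterm : ∀ m n : ℕ, (d m * (starRingEnd ℂ) (d n)) * K m n
        = (if m = n then (d m * (starRingEnd ℂ) (d n)) * (T:ℂ) else 0)
          + (if m = n then 0 else (d m * (starRingEnd ℂ) (d n)) * Koff m n) := by
      intro m n
      rw [hK, hKoff]
      rcases eq_or_ne m n with h | h
      · subst h; simp
      · simp only [if_neg h]
        ring
    rw [Finset.sum_congr rfl (fun m _ => Finset.sum_congr rfl (fun n _ => hterm m n))]
    rw [Finset.sum_congr rfl (fun m _ => Finset.sum_add_distrib), Finset.sum_add_distrib]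
    congr 1
    calc ∑ m ∈ Finset.Icc 1 N, ∑ n ∈ Finset.Icc 1 N,
          (if m = n then (d m * (starRingEnd ℂ) (d n)) * (T:ℂ) else 0)
        = ∑ m ∈ Finset.Icc 1 N, (if m ∈ Finset.Icc 1 N
            then (d m * (starRingEnd ℂ) (d m)) * (T:ℂ) else 0) :=
          Finset.sum_congr rfl fun m _ => Finset.sum_ite_eq _ m _
      _ = ∑ m ∈ Finset.Icc 1 N, (d m * (starRingEnd ℂ) (d m)) * (T:ℂ) :=
          Finset.sum_congr rfl fun m hm => if_pos hm
      _ = (T:ℂ) * (Sd:ℂ) := by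
          rw [hSd]
          push_cast
          rw [Finset.mul_sum]
          apply Finset.sum_congr rfl; intro m _
          rw [Complex.mul_conj]
          push_cast
          ring
  -- off-diagonal kernel decomposition
  set rho : ℕ → ℂ := fun m => d m * Complex.exp (-(Complex.I)*(T:ℂ)*(Real.log m:ℂ)) with hrho
  set g : ℕ → ℕ → ℝ := fun m n => 1/(Real.log m - Real.log n) with hg
  have hker : ∀ m ∈ Finset.Icc 1 N, ∀ n ∈ Finset.Icc 1 N,
      (if m = n then 0 else (d m * (starRingEnd ℂ) (d n)) * Koff m n)
        = Complex.I * (rho m * (starRingEnd ℂ) (rho n) * ((g m n : ℝ):ℂ))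
          - Complex.I * (d m * (starRingEnd ℂ) (d n) * ((g m n : ℝ):ℂ)) := by
    intro m hm n hn
    rw [Finset.mem_Icc] at hm hn
    rcases eq_or_ne m n with h | h
    · subst h
      rw [if_pos rfl]
      simp [hg]
    · simp only [if_neg h, hKoff, hrho, hg]
      have hll : Real.log m - Real.log n ≠ 0 := by
        rw [sub_ne_zero]
        exact log_ne_log hm.1 hn.1 h
      have hllC : (Real.log m : ℂ) - (Real.log n : ℂ) ≠ 0 := by
        rw [← Complex.ofReal_sub]
        exact_mod_cast hll
      have hconjrho : (starRingEnd ℂ) (d n * Complex.exp (-(Complex.I)*(T:ℂ)*(Real.log n:ℂ)))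
          = (starRingEnd ℂ) (d n) * Complex.exp (Complex.I*(T:ℂ)*(Real.log n:ℂ)) := by
        rw [_root_.map_mul, ← Complex.exp_conj]
        congr 2
        simp only [_root_.map_mul, _root_.map_neg, Complex.conj_I, Complex.conj_ofReal]
        ring
      rw [hconjrho]
      rw [show Complex.I*((Real.log n:ℂ) - (Real.log m:ℂ)) * T
          = -(Complex.I)*(T:ℂ)*(Real.log m:ℂ) + Complex.I*(T:ℂ)*(Real.log n:ℂ) by ring]
      rw [Complex.exp_add]
      rw [Complex.ofReal_div, Complex.ofReal_one, Complex.ofReal_sub]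
      have key : (Complex.I*((Real.log n:ℂ) - (Real.log m:ℂ)))⁻¹
          = Complex.I * (((Real.log m:ℂ) - (Real.log n:ℂ)))⁻¹ := by
        rw [mul_inv, Complex.inv_I]
        rw [show (Real.log n:ℂ) - (Real.log m:ℂ) = -((Real.log m:ℂ) - (Real.log n:ℂ)) by ring]
        rw [inv_neg]
        ring
      rw [div_eq_mul_inv, key]
      ring
  -- rewrite off-diagonal sum as two bilinear forms
  have hEoff : ∑ m ∈ Finset.Icc 1 N, ∑ n ∈ Finset.Icc 1 N,
        (if m = n then 0 else (d m * (starRingEnd ℂ) (d n)) * Koff m n)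
      = Complex.I * (∑ m ∈ Finset.Icc 1 N, ∑ n ∈ Finset.Icc 1 N,
            rho m * (starRingEnd ℂ) (rho n) * ((g m n : ℝ):ℂ))
        - Complex.I * (∑ m ∈ Finset.Icc 1 N, ∑ n ∈ Finset.Icc 1 N,
            d m * (starRingEnd ℂ) (d n) * ((g m n : ℝ):ℂ)) := by
    rw [Finset.sum_congr rfl (fun m hm => Finset.sum_congr rfl (fun n hn => hker m hm n hn))]
    rw [Finset.sum_congr rfl (fun m _ => Finset.sum_sub_distrib _ _), Finset.sum_sub_distrib]
    congr 1
    · rw [Finset.mul_sum]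
      apply Finset.sum_congr rfl; intro m _
      rw [Finset.mul_sum]
    · rw [Finset.mul_sum]
      apply Finset.sum_congr rfl; intro m _
      rw [Finset.mul_sum]
  -- reindex to Fin N
  set lam : Fin N → ℝ := fun i => Real.log (i.val + 1) with hlam
  have hinj : ∀ r s : Fin N, r ≠ s → lam r ≠ lam s := by
    intro r s hrs
    simp only [hlam]
    rw [show ((r.val : ℝ) + 1) = ((r.val + 1 : ℕ) : ℝ) by push_cast; ring,
      show ((s.val : ℝ) + 1) = ((s.val + 1 : ℕ) : ℝ) by push_cast; ring]
    exact log_ne_log (by omega) (by omega) (fun he => hrs (Fin.ext (by omega)))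
  have hgcm : ∀ r s : Fin N, ((g (r.val+1) (s.val+1) : ℝ) : ℂ) = ((cm lam r s : ℝ) : ℂ) := by
    intro r s
    congr 1
    rcases eq_or_ne r s with h | h
    · subst h
      simp [cm, hg]
    · have hval : r.val + 1 ≠ s.val + 1 := fun he => h (Fin.ext (by omega))
      simp only [hg, cm, if_neg h, hlam]
      push_cast
      ring_nf
  set u0 : Fin N → ℂ := fun s => (starRingEnd ℂ) (d (s.val+1)) with hu0
  set u1 : Fin N → ℂ := fun s => (starRingEnd ℂ) (rho (s.val+1)) with hu1
  have hS0fin : (∑ m ∈ Finset.Icc 1 N, ∑ n ∈ Finset.Icc 1 N,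
        d m * (starRingEnd ℂ) (d n) * ((g m n : ℝ):ℂ))
      = ∑ r : Fin N, ∑ s : Fin N, (starRingEnd ℂ) (u0 r) * ((cm lam r s : ℝ):ℂ) * u0 s := by
    rw [Icc_to_fin N (fun m => ∑ n ∈ Finset.Icc 1 N,
      d m * (starRingEnd ℂ) (d n) * ((g m n : ℝ):ℂ))]
    apply Finset.sum_congr rfl; intro r _
    rw [Icc_to_fin N (fun n => d (r.val+1) * (starRingEnd ℂ) (d n) * ((g (r.val+1) n : ℝ):ℂ))]
    apply Finset.sum_congr rfl; intro s _
    rw [hgcm r s]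
    simp only [hu0, Complex.conj_conj]
    ring
  have hS1fin : (∑ m ∈ Finset.Icc 1 N, ∑ n ∈ Finset.Icc 1 N,
        rho m * (starRingEnd ℂ) (rho n) * ((g m n : ℝ):ℂ))
      = ∑ r : Fin N, ∑ s : Fin N, (starRingEnd ℂ) (u1 r) * ((cm lam r s : ℝ):ℂ) * u1 s := by
    rw [Icc_to_fin N (fun m => ∑ n ∈ Finset.Icc 1 N,
      rho m * (starRingEnd ℂ) (rho n) * ((g m n : ℝ):ℂ))]
    apply Finset.sum_congr rfl; intro r _
    rw [Icc_to_fin N (fun n => rho (r.val+1) * (starRingEnd ℂ) (rho n) * ((g (r.val+1) n : ℝ):ℂ))]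
    apply Finset.sum_congr rfl; intro s _
    rw [hgcm r s]
    simp only [hu1, Complex.conj_conj]
    ring
  have hn0 : ∑ r : Fin N, Complex.normSq (u0 r) = Sd := by
    rw [hSd, Icc_to_fin N (fun n => Complex.normSq (d n))]
    apply Finset.sum_congr rfl; intro r _
    simp [hu0, Complex.normSq_conj]
  have hexp1 : ∀ x : ℝ, Complex.normSq (Complex.exp (-(Complex.I)*(T:ℂ)*(x:ℂ))) = 1 := by
    intro x
    rw [Complex.normSq_eq_norm_sq, Complex.norm_exp]
    have hre0 : (-(Complex.I)*(T:ℂ)*(x:ℂ)).re = 0 := by simp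
    rw [hre0]
    simp
  have hn1 : ∑ r : Fin N, Complex.normSq (u1 r) = Sd := by
    rw [hSd, Icc_to_fin N (fun n => Complex.normSq (d n))]
    apply Finset.sum_congr rfl; intro r _
    simp only [hu1, Complex.normSq_conj, hrho, Complex.normSq_mul]
    rw [hexp1]
    ring
  have hQ0' : (0:ℝ) ≤ 4*(N:ℝ)^2 := by positivity
  have hb0 := hilbert_bilinear lam hinj (4*(N:ℝ)^2) hQ0' (hQ_log N) u0
  have hb1 := hilbert_bilinear lam hinj (4*(N:ℝ)^2) hQ0' (hQ_log N) u1
  rw [hn0] at hb0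
  rw [hn1] at hb1
  have hsqrt : Real.sqrt (3*(4*(N:ℝ)^2)) ≤ 4*N := by
    rw [show 3*(4*(N:ℝ)^2) = 12*(N:ℝ)^2 by ring]
    calc Real.sqrt (12*(N:ℝ)^2) ≤ Real.sqrt ((4*(N:ℝ))^2) := by
          apply Real.sqrt_le_sqrt
          nlinarith [sq_nonneg (N:ℝ)]
      _ = 4*N := Real.sqrt_sq (by positivity)
  have hSd0 : 0 ≤ Sd := Finset.sum_nonneg fun n _ => Complex.normSq_nonneg _
  have hb0' : ‖∑ r : Fin N, ∑ s : Fin N,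
      (starRingEnd ℂ) (u0 r) * ((cm lam r s : ℝ):ℂ) * u0 s‖ ≤ 4*N*Sd :=
    hb0.trans (mul_le_mul_of_nonneg_right hsqrt hSd0)
  have hb1' : ‖∑ r : Fin N, ∑ s : Fin N,
      (starRingEnd ℂ) (u1 r) * ((cm lam r s : ℝ):ℂ) * u1 s‖ ≤ 4*N*Sd :=
    hb1.trans (mul_le_mul_of_nonneg_right hsqrt hSd0)
  -- final assembly
  have habs2 : ∑ n ∈ Finset.Icc 1 N, ‖d n‖^2 = Sd := by
    rw [hSd]
    exact Finset.sum_congr rfl fun n _ => Complex.sq_norm _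
  rw [habs2, hre, hInt, hsplit, hEoff, hS0fin, hS1fin]
  set S0 : ℂ := ∑ r : Fin N, ∑ s : Fin N,
    (starRingEnd ℂ) (u0 r) * ((cm lam r s : ℝ):ℂ) * u0 s with hS0v
  set S1 : ℂ := ∑ r : Fin N, ∑ s : Fin N,
    (starRingEnd ℂ) (u1 r) * ((cm lam r s : ℝ):ℂ) * u1 s with hS1v
  have hrepart : ((T:ℂ)*(Sd:ℂ) + (Complex.I * S1 - Complex.I * S0)).re
      = T*Sd + (Complex.I * S1 - Complex.I * S0).re := by
    rw [Complex.add_re, ← Complex.ofReal_mul, Complex.ofReal_re]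
  rw [hrepart]
  rw [show T*Sd + (Complex.I * S1 - Complex.I * S0).re - T*Sd
      = (Complex.I * S1 - Complex.I * S0).re by ring]
  calc |(Complex.I * S1 - Complex.I * S0).re|
      ≤ ‖Complex.I * S1 - Complex.I * S0‖ := Complex.abs_re_le_norm _
    _ ≤ ‖Complex.I * S1‖ + ‖Complex.I * S0‖ := by
        rw [sub_eq_add_neg]
        refine (norm_add_le _ _).trans ?_
        rw [norm_neg]
    _ = ‖S1‖ + ‖S0‖ := by
        rw [norm_mul, norm_mul, Complex.norm_I, one_mul, one_mul]
    _ ≤ 4*N*Sd + 4*N*Sd := add_le_add hb1' hb0'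
    _ = 8*N*Sd := by ring
    _ ≤ 8*(N:ℝ)*Sd := le_refl _
end

section
/- Majorant principle for Dirichlet polynomials: if |d_n| ≤ D_n for 1 ≤ n ≤ N (with D_n real nonnegative), then for all T > 0, ∫_{−T}^{T} |Σ_{n=1}^N d_n n^{−it}|² dt ≤ 3 ∫_{−T}^{T} |Σ_{n=1}^N D_n n^{−it}|² dt. -/
set_option maxHeartbeats 1000000


open Real Complex MeasureTheory Finset

noncomputable section

namespace DirMaj

/-- frequency exponential -/
def e (x t : ℝ) : ℂ := Complex.exp ((t : ℂ) * (x : ℂ) * Complex.I)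

lemma e_cont (x : ℝ) : Continuous fun t => e x t := by
  unfold e
  exact Complex.continuous_exp.comp (by fun_prop)

lemma e_add_t (x s u : ℝ) : e x (u + s) = e x s * e x u := by
  unfold e; rw [← Complex.exp_add]; push_cast; ring_nf

lemma e_mul (x y t : ℝ) : e x t * e y t = e (x + y) t := by
  unfold e; rw [← Complex.exp_add]; push_cast; ring_nf

lemma conj_e (x t : ℝ) : (starRingEnd ℂ) (e x t) = e (-x) t := by
  unfold e
  rw [← Complex.exp_conj]
  congr 1
  simp only [map_mul, Complex.conj_ofReal, Complex.conj_I]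
  push_cast
  ring

lemma abs_e (x t : ℝ) : ‖e x t‖ = 1 := by
  unfold e
  rw [Complex.norm_exp]
  simp [Complex.mul_re]

/-- Fejér triangle kernel -/
def K (T t : ℝ) : ℝ := max 0 (1 - |t| / T)

lemma K_nonneg (T t : ℝ) : 0 ≤ K T t := le_max_left _ _

lemma K_le_one (hT : 0 < T) (t : ℝ) : K T t ≤ 1 := by
  unfold K
  have h1 : 0 ≤ |t| / T := by positivity
  apply max_le (by norm_num) (by linarith)

lemma K_cont (T : ℝ) : Continuous (K T) :=
  continuous_const.max (continuous_const.sub (continuous_abs.div_const T))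

lemma K_eq_of_abs_le (hT : 0 < T) {t : ℝ} (h : |t| ≤ T) : K T t = 1 - |t| / T := by
  unfold K
  apply max_eq_right
  rw [sub_nonneg, div_le_one hT]
  exact h

lemma K_eq_zero (hT : 0 < T) {t : ℝ} (h : T ≤ |t|) : K T t = 0 := by
  unfold K
  apply max_eq_left
  rw [sub_nonpos, le_div_iff₀ hT]
  linarith

/-- the Fourier transform of the triangle kernel -/
def kr (T l : ℝ) : ℝ := if l = 0 then T else 2 * (1 - Real.cos (T * l)) / (T * l ^ 2)

lemma kr_nonneg (hT : 0 < T) (l : ℝ) : 0 ≤ kr T l := by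
  unfold kr
  split_ifs with h
  · exact hT.le
  · have h1 : Real.cos (T * l) ≤ 1 := Real.cos_le_one _
    have h2 : 0 < T * l ^ 2 := by positivity
    have h3 : 0 ≤ 2 * (1 - Real.cos (T * l)) := by nlinarith
    exact div_nonneg h3 h2.le

lemma int_cos {T : ℝ} (hT : 0 < T) (l : ℝ) :
    (∫ t in (0:ℝ)..T, (1 - t / T) * (2 * Real.cos (t * l))) = kr T l := by
  rcases eq_or_ne l 0 with rfl | hl
  · have H : ∀ t ∈ Set.uIcc (0:ℝ) T,
        HasDerivAt (fun u : ℝ => 2 * u - u ^ 2 / T) ((1 - t / T) * (2 * Real.cos (t * 0))) t := by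
      intro t _
      have hd := ((hasDerivAt_id t).const_mul 2).sub ((hasDerivAt_pow 2 t).div_const T)
      refine hd.congr_deriv ?_; symm
      simp
      field_simp
    rw [intervalIntegral.integral_eq_sub_of_hasDerivAt H
      (((by fun_prop : Continuous fun t : ℝ => (1 - t / T) * (2 * Real.cos (t * 0)))).intervalIntegrable _ _)]
    simp [kr]
    field_simp
    ring
  · have H : ∀ t ∈ Set.uIcc (0:ℝ) T,
        HasDerivAt (fun u => 2 * ((1 - u / T) * Real.sin (u * l) / l - Real.cos (u * l) / (T * l ^ 2)))
          ((1 - t / T) * (2 * Real.cos (t * l))) t := by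
      intro t _
      have hs : HasDerivAt (fun u : ℝ => Real.sin (u * l)) (Real.cos (t * l) * l) t := by
        exact (Real.hasDerivAt_sin (t * l)).comp t (hasDerivAt_mul_const l)
      have hc : HasDerivAt (fun u : ℝ => Real.cos (u * l)) (-Real.sin (t * l) * l) t := by
        exact (Real.hasDerivAt_cos (t * l)).comp t (hasDerivAt_mul_const l)
      have h1 : HasDerivAt (fun u : ℝ => 1 - u / T) (-(1 / T)) t := by
        simpa using ((hasDerivAt_id t).div_const T).const_sub 1
      have h2 := (((h1.mul hs).div_const l).sub (hc.div_const (T * l ^ 2))).const_mul 2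
      refine h2.congr_deriv ?_; symm
      field_simp
      ring
    rw [intervalIntegral.integral_eq_sub_of_hasDerivAt H
      (((by fun_prop : Continuous fun t : ℝ => (1 - t / T) * (2 * Real.cos (t * l)))).intervalIntegrable _ _)]
    simp [kr, hl]
    field_simp
    ring

lemma kappa_eq {T : ℝ} (hT : 0 < T) (l : ℝ) :
    (∫ t in (-T)..T, (K T t : ℂ) * e l t) = ((kr T l : ℝ) : ℂ) := by
  have hcont1 : Continuous fun t : ℝ => ((1 - |t| / T : ℝ) : ℂ) * e l t := by
    apply Continuous.mul _ (e_cont l)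
    exact Complex.continuous_ofReal.comp (continuous_const.sub (continuous_abs.div_const T))
  have hcont2 : Continuous fun t : ℝ => ((1 - |(-t)| / T : ℝ) : ℂ) * e l (-t) := by
    apply Continuous.mul _ ((e_cont l).comp continuous_neg)
    apply Complex.continuous_ofReal.comp
    fun_prop
  have h1 : (∫ t in (-T)..T, (K T t : ℂ) * e l t)
      = ∫ t in (-T)..T, ((1 - |t| / T : ℝ) : ℂ) * e l t := by
    apply intervalIntegral.integral_congr
    intro t ht
    rw [Set.uIcc_of_le (by linarith)] at ht
    show ((K T t : ℝ) : ℂ) * e l t = ((1 - |t| / T : ℝ) : ℂ) * e l t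
    rw [K_eq_of_abs_le hT (abs_le.mpr ⟨ht.1, ht.2⟩)]
  rw [h1]
  rw [← intervalIntegral.integral_add_adjacent_intervals (a := -T) (b := 0) (c := T)
    (hcont1.intervalIntegrable _ _) (hcont1.intervalIntegrable _ _)]
  have h2 : (∫ t in (-T)..(0:ℝ), ((1 - |t| / T : ℝ) : ℂ) * e l t)
      = ∫ t in (0:ℝ)..T, ((1 - |(-t)| / T : ℝ) : ℂ) * e l (-t) := by
    rw [intervalIntegral.integral_comp_neg (fun t => ((1 - |t| / T : ℝ) : ℂ) * e l t)]
    norm_num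
  rw [h2, ← intervalIntegral.integral_add (hcont2.intervalIntegrable _ _)
    (hcont1.intervalIntegrable _ _)]
  have h3 : (∫ t in (0:ℝ)..T, (((1 - |(-t)| / T : ℝ) : ℂ) * e l (-t) + ((1 - |t| / T : ℝ) : ℂ) * e l t))
      = ∫ t in (0:ℝ)..T, (((1 - t / T) * (2 * Real.cos (t * l)) : ℝ) : ℂ) := by
    apply intervalIntegral.integral_congr
    intro t ht
    rw [Set.uIcc_of_le hT.le] at ht
    show ((1 - |(-t)| / T : ℝ) : ℂ) * e l (-t) + ((1 - |t| / T : ℝ) : ℂ) * e l t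
        = (((1 - t / T) * (2 * Real.cos (t * l)) : ℝ) : ℂ)
    have habs : |t| = t := _root_.abs_of_nonneg ht.1
    have he : e l (-t) + e l t = ((2 * Real.cos (t * l) : ℝ) : ℂ) := by
      unfold e
      rw [show ((-t : ℝ) : ℂ) * (l : ℂ) * Complex.I = ((-(t * l) : ℝ) : ℂ) * Complex.I by
        push_cast; ring]
      rw [show ((t : ℝ) : ℂ) * (l : ℂ) * Complex.I = (((t * l) : ℝ) : ℂ) * Complex.I by
        push_cast; ring]
      rw [Complex.exp_mul_I, Complex.exp_mul_I, ← Complex.ofReal_cos, ← Complex.ofReal_sin,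
        ← Complex.ofReal_cos, ← Complex.ofReal_sin, Real.cos_neg, Real.sin_neg]
      push_cast
      ring
    rw [abs_neg, habs, Complex.ofReal_mul, ← he]
    ring
  rw [h3, intervalIntegral.integral_ofReal, int_cos hT l]

/-- the Dirichlet polynomial in exponential form -/
def S (N : ℕ) (c : ℕ → ℂ) (t : ℝ) : ℂ :=
  ∑ n ∈ Finset.Icc 1 N, c n * e (-(Real.log n)) t

lemma Scont (N : ℕ) (c : ℕ → ℂ) : Continuous fun t => S N c t := by
  unfold S
  exact continuous_finset_sum _ fun n _ => continuous_const.mul (e_cont _)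

lemma Ssq_cont (N : ℕ) (c : ℕ → ℂ) : Continuous fun t => (‖S N c t‖)^2 :=
  (continuous_norm.comp (Scont N c)).pow 2

lemma expansion {T : ℝ} (hT : 0 < T) (N : ℕ) (c : ℕ → ℂ) :
    (∫ t in (-T)..T, K T t * (‖S N c t‖)^2)
      = ∑ m ∈ Finset.Icc 1 N, ∑ n ∈ Finset.Icc 1 N,
          (c m * (starRingEnd ℂ) (c n)).re * kr T (Real.log n - Real.log m) := by
  have hint : ∀ (m n : ℕ), IntervalIntegrable
      (fun t => (c m * (starRingEnd ℂ) (c n)) * ((K T t : ℂ) * e (Real.log n - Real.log m) t))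
      volume (-T) T := by
    intro m n
    apply Continuous.intervalIntegrable
    exact continuous_const.mul ((Complex.continuous_ofReal.comp (K_cont T)).mul (e_cont _))
  have key : ((∫ t in (-T)..T, K T t * (‖S N c t‖)^2 : ℝ) : ℂ)
      = ∑ m ∈ Finset.Icc 1 N, ∑ n ∈ Finset.Icc 1 N,
          (c m * (starRingEnd ℂ) (c n)) * ((kr T (Real.log n - Real.log m) : ℝ) : ℂ) := by
    rw [← intervalIntegral.integral_ofReal]
    have hfun : ∀ t : ℝ, ((K T t * (‖S N c t‖)^2 : ℝ) : ℂ)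
        = ∑ m ∈ Finset.Icc 1 N, ∑ n ∈ Finset.Icc 1 N,
            (c m * (starRingEnd ℂ) (c n)) * ((K T t : ℂ) * e (Real.log n - Real.log m) t) := by
      intro t
      have h1 : (((‖S N c t‖)^2 : ℝ) : ℂ) = S N c t * (starRingEnd ℂ) (S N c t) := by
        rw [Complex.mul_conj]
        norm_cast
        exact Complex.sq_norm _
      have h2 : S N c t * (starRingEnd ℂ) (S N c t)
          = ∑ m ∈ Finset.Icc 1 N, ∑ n ∈ Finset.Icc 1 N,
              (c m * (starRingEnd ℂ) (c n)) * e (Real.log n - Real.log m) t := by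
        unfold S
        rw [map_sum, Finset.sum_mul_sum]
        refine Finset.sum_congr rfl fun m hm => Finset.sum_congr rfl fun n hn => ?_
        rw [map_mul, conj_e]
        have h4 : e (-(Real.log m)) t * e (-(-(Real.log n))) t
            = e (Real.log n - Real.log m) t := by
          rw [e_mul]
          congr 1
          ring
        calc c m * e (-(Real.log m)) t * ((starRingEnd ℂ) (c n) * e (-(-(Real.log n))) t)
            = (c m * (starRingEnd ℂ) (c n)) * (e (-(Real.log m)) t * e (-(-(Real.log n))) t) := by
              ring
          _ = (c m * (starRingEnd ℂ) (c n)) * e (Real.log n - Real.log m) t := by rw [h4]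
      rw [Complex.ofReal_mul, h1, h2, Finset.mul_sum]
      refine Finset.sum_congr rfl fun m _ => ?_
      rw [Finset.mul_sum]
      refine Finset.sum_congr rfl fun n _ => ?_
      ring
    rw [intervalIntegral.integral_congr
      (f := fun t : ℝ => ((K T t * (‖S N c t‖)^2 : ℝ) : ℂ))
      (g := fun t : ℝ => ∑ m ∈ Finset.Icc 1 N, ∑ n ∈ Finset.Icc 1 N,
        (c m * (starRingEnd ℂ) (c n)) * ((K T t : ℂ) * e (Real.log n - Real.log m) t))
      (fun t _ => hfun t)]
    have hint2 : ∀ m : ℕ, IntervalIntegrable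
        (fun t => ∑ n ∈ Finset.Icc 1 N,
          (c m * (starRingEnd ℂ) (c n)) * ((K T t : ℂ) * e (Real.log n - Real.log m) t))
        volume (-T) T := by
      intro m
      apply Continuous.intervalIntegrable
      apply continuous_finset_sum
      intro n _
      exact continuous_const.mul ((Complex.continuous_ofReal.comp (K_cont T)).mul (e_cont _))
    rw [intervalIntegral.integral_finset_sum
      (f := fun (m : ℕ) (t : ℝ) => ∑ n ∈ Finset.Icc 1 N,
        (c m * (starRingEnd ℂ) (c n)) * ((K T t : ℂ) * e (Real.log n - Real.log m) t))
      (fun m _ => hint2 m)]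
    refine Finset.sum_congr rfl fun m _ => ?_
    rw [intervalIntegral.integral_finset_sum
      (f := fun (n : ℕ) (t : ℝ) =>
        (c m * (starRingEnd ℂ) (c n)) * ((K T t : ℂ) * e (Real.log n - Real.log m) t))
      (fun n _ => hint m n)]
    refine Finset.sum_congr rfl fun n _ => ?_
    rw [intervalIntegral.integral_const_mul, kappa_eq hT]
  have := congrArg Complex.re key
  simpa [Complex.re_sum, Complex.mul_re] using this

lemma quad {T : ℝ} (hT : 0 < T) (N : ℕ) (c : ℕ → ℂ) (D : ℕ → ℝ) (hD : ∀ n, 0 ≤ D n)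
    (h : ∀ n ∈ Finset.Icc 1 N, ‖c n‖ ≤ D n) :
    (∫ t in (-T)..T, K T t * (‖S N c t‖)^2)
      ≤ ∫ t in (-T)..T, K T t * (‖S N (fun n => (D n : ℂ)) t‖)^2 := by
  rw [expansion hT N c, expansion hT N _]
  apply Finset.sum_le_sum
  intro m hm
  apply Finset.sum_le_sum
  intro n hn
  apply mul_le_mul_of_nonneg_right _ (kr_nonneg hT _)
  have h1 : (c m * (starRingEnd ℂ) (c n)).re ≤ ‖c m * (starRingEnd ℂ) (c n)‖ :=
    Complex.re_le_norm _
  have h2 : ‖c m * (starRingEnd ℂ) (c n)‖ = ‖c m‖ * ‖c n‖ := by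
    rw [norm_mul, Complex.norm_conj]
  have h3 : (((D m : ℂ)) * (starRingEnd ℂ) ((D n : ℂ))).re = D m * D n := by
    rw [Complex.conj_ofReal]
    norm_cast
  rw [h3]
  calc (c m * (starRingEnd ℂ) (c n)).re ≤ ‖c m‖ * ‖c n‖ := by
        rw [← h2]; exact h1
    _ ≤ D m * D n :=
        mul_le_mul (h m hm) (h n hn) (norm_nonneg _) (hD m)

lemma cover {T : ℝ} (hT : 0 < T) {t : ℝ} (h1 : -T ≤ t) (h2 : t ≤ T) :
    (1:ℝ) ≤ 3/2 * (K T (t - 2*T/3) + K T (t + 2*T/3)) := by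
  have hb1 : ∀ x : ℝ, |x| ≤ T/3 → 2/3 ≤ K T x := by
    intro x hx
    have hxT : |x| ≤ T := le_trans hx (by linarith)
    rw [K_eq_of_abs_le hT hxT]
    have hdiv : |x| / T ≤ 1/3 := by
      rw [div_le_iff₀ hT]
      linarith
    linarith
  rcases le_or_gt t (-(T/3)) with hc | hc
  · have hk := hb1 (t + 2*T/3) (abs_le.mpr ⟨by linarith, by linarith⟩)
    have h0 := K_nonneg T (t - 2*T/3)
    linarith
  rcases le_or_gt (T/3) t with hc2 | hc2
  · have hk := hb1 (t - 2*T/3) (abs_le.mpr ⟨by linarith, by linarith⟩)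
    have h0 := K_nonneg T (t + 2*T/3)
    linarith
  · have e1 : K T (t - 2*T/3) = 1 - (2*T/3 - t)/T := by
      rw [K_eq_of_abs_le hT (abs_le.mpr ⟨by linarith, by linarith⟩),
        _root_.abs_of_nonpos (by linarith)]
      ring_nf
    have e2 : K T (t + 2*T/3) = 1 - (t + 2*T/3)/T := by
      rw [K_eq_of_abs_le hT (abs_le.mpr ⟨by linarith, by linarith⟩),
        _root_.abs_of_nonneg (by linarith)]
    rw [e1, e2]
    have hsum : (2*T/3 - t)/T + (t + 2*T/3)/T = 4/3 := by
      field_simp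
      ring
    linarith

lemma shift_le {T : ℝ} (hT : 0 < T) (N : ℕ) (c : ℕ → ℂ) (s : ℝ) (hs : |s| ≤ T) :
    (∫ t in (-T)..T, K T (t - s) * (‖S N c t‖)^2)
      ≤ ∫ u in (-T)..T, K T u * (‖S N c (u + s)‖)^2 := by
  have hcont : Continuous fun t => K T (t - s) * (‖S N c t‖)^2 :=
    ((K_cont T).comp (continuous_id.sub continuous_const)).mul (Ssq_cont N c)
  have hnn : ∀ t : ℝ, 0 ≤ K T (t - s) * (‖S N c t‖)^2 := by
    intro t
    exact mul_nonneg (K_nonneg _ _) (by positivity)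
  have base : (∫ t in (s - T)..(s + T), K T (t - s) * (‖S N c t‖)^2)
      = ∫ u in (-T)..T, K T u * (‖S N c (u + s)‖)^2 := by
    have hcomp := intervalIntegral.integral_comp_add_right (a := -T) (b := T)
      (f := fun t => K T (t - s) * (‖S N c t‖)^2) s
    rw [show -T + s = s - T by ring, show T + s = s + T by ring] at hcomp
    rw [← hcomp]
    apply intervalIntegral.integral_congr
    intro u _
    simp
  rw [← base]
  rcases le_or_gt 0 s with h0 | h0
  · have hzero : (∫ t in (-T)..(s - T), K T (t - s) * (‖S N c t‖)^2) = 0 := by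
      have : ∀ t ∈ Set.uIcc (-T) (s - T), K T (t - s) * (‖S N c t‖)^2 = 0 := by
        intro t ht
        rw [Set.uIcc_of_le (by linarith)] at ht
        have : T ≤ |t - s| := by
          rw [abs_sub_comm, _root_.abs_of_nonneg (by linarith [ht.2])]
          linarith [ht.2]
        rw [K_eq_zero hT this, zero_mul]
      rw [intervalIntegral.integral_congr this]
      simp
    have hsplit1 : (∫ t in (-T)..T, K T (t - s) * (‖S N c t‖)^2)
        = (∫ t in (-T)..(s - T), K T (t - s) * (‖S N c t‖)^2)
          + ∫ t in (s - T)..T, K T (t - s) * (‖S N c t‖)^2 :=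
      (intervalIntegral.integral_add_adjacent_intervals
        (hcont.intervalIntegrable _ _) (hcont.intervalIntegrable _ _)).symm
    have hsplit2 : (∫ t in (s - T)..(s + T), K T (t - s) * (‖S N c t‖)^2)
        = (∫ t in (s - T)..T, K T (t - s) * (‖S N c t‖)^2)
          + ∫ t in T..(s + T), K T (t - s) * (‖S N c t‖)^2 :=
      (intervalIntegral.integral_add_adjacent_intervals
        (hcont.intervalIntegrable _ _) (hcont.intervalIntegrable _ _)).symm
    have hpos : 0 ≤ ∫ t in T..(s + T), K T (t - s) * (‖S N c t‖)^2 :=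
      intervalIntegral.integral_nonneg (by linarith) (fun u _ => hnn u)
    rw [hsplit1, hsplit2, hzero]
    linarith
  · have hzero : (∫ t in (s + T)..T, K T (t - s) * (‖S N c t‖)^2) = 0 := by
      have : ∀ t ∈ Set.uIcc (s + T) T, K T (t - s) * (‖S N c t‖)^2 = 0 := by
        intro t ht
        rw [Set.uIcc_of_le (by linarith)] at ht
        have : T ≤ |t - s| := by
          rw [_root_.abs_of_nonneg (by linarith [ht.1])]
          linarith [ht.1]
        rw [K_eq_zero hT this, zero_mul]
      rw [intervalIntegral.integral_congr this]
      simp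
    have hsplit1 : (∫ t in (-T)..T, K T (t - s) * (‖S N c t‖)^2)
        = (∫ t in (-T)..(s + T), K T (t - s) * (‖S N c t‖)^2)
          + ∫ t in (s + T)..T, K T (t - s) * (‖S N c t‖)^2 :=
      (intervalIntegral.integral_add_adjacent_intervals
        (hcont.intervalIntegrable _ _) (hcont.intervalIntegrable _ _)).symm
    have hsplit2 : (∫ t in (s - T)..(s + T), K T (t - s) * (‖S N c t‖)^2)
        = (∫ t in (s - T)..(-T), K T (t - s) * (‖S N c t‖)^2)
          + ∫ t in (-T)..(s + T), K T (t - s) * (‖S N c t‖)^2 :=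
      (intervalIntegral.integral_add_adjacent_intervals
        (hcont.intervalIntegrable _ _) (hcont.intervalIntegrable _ _)).symm
    have hpos : 0 ≤ ∫ t in (s - T)..(-T), K T (t - s) * (‖S N c t‖)^2 :=
      intervalIntegral.integral_nonneg (by linarith) (fun u _ => hnn u)
    rw [hsplit1, hsplit2, hzero]
    linarith

lemma cpow_eq {n : ℕ} (hn : 1 ≤ n) (t : ℝ) :
    (n : ℂ) ^ (-(t : ℂ) * Complex.I) = e (-(Real.log n)) t := by
  have hne : (n : ℂ) ≠ 0 := by
    exact_mod_cast Nat.cast_ne_zero.mpr (by omega)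
  rw [Complex.cpow_def_of_ne_zero hne]
  unfold e
  congr 1
  have hlog : Complex.log (n : ℂ) = ((Real.log n : ℝ) : ℂ) := by
    rw [show ((n : ℕ) : ℂ) = (((n : ℝ) : ℝ) : ℂ) by push_cast; ring]
    rw [Complex.ofReal_log (by positivity)]
  rw [hlog]
  push_cast
  ring

end DirMaj

end

open DirMaj in
/-- Majorant principle: if `|d_n| ≤ D_n` then the mean square of the Dirichlet polynomial
with coefficients `d_n` is at most `3` times that with coefficients `D_n`. -/
theorem dirichlet_majorant_principle (N : ℕ) (T : ℝ) (hT : 0 < T)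
    (d : ℕ → ℂ) (D : ℕ → ℝ) (hD : ∀ n, 0 ≤ D n)
    (h : ∀ n ∈ Finset.Icc 1 N, ‖d n‖ ≤ D n) :
    (∫ t in (-T)..T,
        (‖∑ n ∈ Finset.Icc 1 N, d n * (n : ℂ) ^ (-(t : ℂ) * Complex.I)‖)^2)
      ≤ 3 * ∫ t in (-T)..T,
        (‖∑ n ∈ Finset.Icc 1 N, (D n : ℂ) * (n : ℂ) ^ (-(t : ℂ) * Complex.I)‖)^2 := by
  have hrw : ∀ (c : ℕ → ℂ) (t : ℝ),
      (∑ n ∈ Finset.Icc 1 N, c n * (n : ℂ) ^ (-(t : ℂ) * Complex.I)) = S N c t := by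
    intro c t
    refine Finset.sum_congr rfl fun n hn => ?_
    rw [cpow_eq (Finset.mem_Icc.mp hn).1]
  have goal_eq1 : (∫ t in (-T)..T,
      (‖∑ n ∈ Finset.Icc 1 N, d n * (n : ℂ) ^ (-(t : ℂ) * Complex.I)‖)^2)
      = ∫ t in (-T)..T, (‖S N d t‖)^2 := by
    congr 1; funext t; rw [hrw]
  have goal_eq2 : (∫ t in (-T)..T,
      (‖∑ n ∈ Finset.Icc 1 N, (D n : ℂ) * (n : ℂ) ^ (-(t : ℂ) * Complex.I)‖)^2)
      = ∫ t in (-T)..T, (‖S N (fun n => (D n : ℂ)) t‖)^2 := by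
    congr 1; funext t; rw [hrw]
  rw [goal_eq1, goal_eq2]
  set b : ℝ := 2*T/3 with hb
  have hbabs : |b| ≤ T := by
    rw [_root_.abs_of_nonneg (by positivity)]
    linarith
  have hnbabs : |(-b)| ≤ T := by rwa [abs_neg]
  -- Step 1: cover the indicator by shifted triangles
  have step1 : (∫ t in (-T)..T, (‖S N d t‖)^2)
      ≤ ∫ t in (-T)..T, (3/2 * (K T (t - b) + K T (t + b))) * (‖S N d t‖)^2 := by
    have hcontBig : Continuous fun t =>
        (3/2 * (K T (t - b) + K T (t + b))) * (‖S N d t‖)^2 :=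
      (continuous_const.mul (((K_cont T).comp (continuous_id.sub continuous_const)).add
        ((K_cont T).comp (continuous_id.add continuous_const)))).mul (Ssq_cont N d)
    apply intervalIntegral.integral_mono_on (by linarith)
      ((Ssq_cont N d).intervalIntegrable _ _)
      (hcontBig.intervalIntegrable _ _)
    intro t ht
    have hcov := cover hT ht.1 ht.2
    nlinarith [sq_nonneg (‖S N d t‖), hcov,
      mul_le_mul_of_nonneg_right hcov (sq_nonneg (‖S N d t‖))]
  have hcontm : ∀ s : ℝ, Continuous fun t => K T (t - s) * (‖S N d t‖)^2 := by
    intro s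
    exact ((K_cont T).comp (continuous_id.sub continuous_const)).mul (Ssq_cont N d)
  have step2 : (∫ t in (-T)..T, (3/2 * (K T (t - b) + K T (t + b))) * (‖S N d t‖)^2)
      = 3/2 * (∫ t in (-T)..T, K T (t - b) * (‖S N d t‖)^2)
        + 3/2 * (∫ t in (-T)..T, K T (t - (-b)) * (‖S N d t‖)^2) := by
    have hfun : ∀ t : ℝ, (3/2 * (K T (t - b) + K T (t + b))) * (‖S N d t‖)^2
        = 3/2 * (K T (t - b) * (‖S N d t‖)^2)
          + 3/2 * (K T (t - (-b)) * (‖S N d t‖)^2) := by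
      intro t
      rw [show t - (-b) = t + b by ring]
      ring
    rw [intervalIntegral.integral_congr (fun t _ => hfun t)]
    rw [intervalIntegral.integral_add
      (f := fun t => 3/2 * (K T (t - b) * (‖S N d t‖)^2))
      (g := fun t => 3/2 * (K T (t - (-b)) * (‖S N d t‖)^2))
      ((continuous_const.mul (hcontm b)).intervalIntegrable _ _)
      ((continuous_const.mul (hcontm (-b))).intervalIntegrable _ _)]
    rw [intervalIntegral.integral_const_mul, intervalIntegral.integral_const_mul]
  -- Step 3: for each shift, bound by the D-polynomial integral
  have step3 : ∀ s : ℝ, |s| ≤ T →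
      (∫ t in (-T)..T, K T (t - s) * (‖S N d t‖)^2)
        ≤ ∫ t in (-T)..T, K T t * (‖S N (fun n => (D n : ℂ)) t‖)^2 := by
    intro s hs
    have h1 := shift_le hT N d s hs
    have h2 : (∫ u in (-T)..T, K T u * (‖S N d (u + s)‖)^2)
        = ∫ u in (-T)..T, K T u * (‖S N (fun n => d n * e (-(Real.log n)) s) u‖)^2 := by
      apply intervalIntegral.integral_congr
      intro u _
      show K T u * (‖S N d (u + s)‖)^2
          = K T u * (‖S N (fun n => d n * e (-(Real.log n)) s) u‖)^2
      have hS : S N d (u + s) = S N (fun n => d n * e (-(Real.log n)) s) u := by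
        unfold S
        refine Finset.sum_congr rfl fun n _ => ?_
        rw [e_add_t]
        ring
      rw [hS]
    have h3 := quad hT N (fun n => d n * e (-(Real.log n)) s) D hD (by
      intro n hn
      rw [norm_mul, abs_e, mul_one]
      exact h n hn)
    calc (∫ t in (-T)..T, K T (t - s) * (‖S N d t‖)^2)
        ≤ ∫ u in (-T)..T, K T u * (‖S N d (u + s)‖)^2 := h1
      _ = ∫ u in (-T)..T, K T u * (‖S N (fun n => d n * e (-(Real.log n)) s) u‖)^2 := h2
      _ ≤ ∫ t in (-T)..T, K T t * (‖S N (fun n => (D n : ℂ)) t‖)^2 := h3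
  -- Step 4: remove the kernel on the right
  have step4 : (∫ t in (-T)..T, K T t * (‖S N (fun n => (D n : ℂ)) t‖)^2)
      ≤ ∫ t in (-T)..T, (‖S N (fun n => (D n : ℂ)) t‖)^2 := by
    apply intervalIntegral.integral_mono_on (by linarith)
      (((K_cont T).mul (Ssq_cont N _)).intervalIntegrable _ _)
      ((Ssq_cont N _).intervalIntegrable _ _)
    intro t _
    have := K_le_one hT t
    simp only [Pi.mul_apply]
    nlinarith [sq_nonneg (‖S N (fun n => (D n : ℂ)) t‖), K_nonneg T t]
  have h3b := step3 b hbabs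
  have h3nb := step3 (-b) hnbabs
  have h4 := step4
  linarith
end
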